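/- arXiv:1210.6277 — 6 statements merged into one kernel-verified Lean document; each statement's English description precedes it below -/
import Mathlib

section
/- Let G be an infinite, connected, quasi-transitive simple graph with finite vertex-degrees. Then there is a constant μ such that for every vertex v, σ_n(v)^{1/n} → μ as n → ∞; moreover μ equals the connective constant lim_{n→∞} (sup_v σ_n(v))^{1/n}. -/
open Filter Topology

/-- The number of `n`-step self-avoiding walks in `G` starting at `v`. -/
noncomputable def sawCount {V : Type*} (G : SimpleGraph V) (v : V) (n : ℕ) : ℕ :=
  Nat.card {p : Σ u : V, G.Walk v u // p.2.IsPath ∧ p.2.length = n}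

/-- The supremum over vertices of the number of `n`-step self-avoiding walks. -/
noncomputable def sawSup {V : Type*} (G : SimpleGraph V) (n : ℕ) : ℕ :=
  sSup (Set.range fun v => sawCount G v n)

/-!
Write `σₙ(v)` for `sawCount G v n` and `Λₙ` for `sawSup G n`. Cutting an `(m + n)`-step
self-avoiding walk after `m` steps gives `σ_{m+n}(v) ≤ σ_m(v) Λₙ`, so `Λ` is submultiplicative and,
by Fekete's lemma, `Λₙ^{1/n} → μ` with `μⁿ ≤ Λₙ`; this also bounds `σₙ(v)^{1/n}` from above.
Quasi-transitivity makes `Λₙ` a maximum over a finite set of vertices `w`, each joined to `v` by a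
path `γ` of length at most some `D`. For a `2m`-step walk `π` from `w`, let `x` be the first vertex
of `γ` (read from `v`) on `π`, and split `π` at `x` into `A` and `B`. Prefixing the segment of `γ`
up to `x` to `A.reverse` and to `B` gives two self-avoiding walks from `v` which, with their
lengths, determine `π`, and one of them has length at least `m`. Hence, if `Λⱼ ≤ C λʲ` for all `j`,
then `μ^{2m} ≤ Λ_{2m} ≤ O(m) · σ_m(v) · C² λ^{m + 2D}`, so `σ_m(v)^{1/m}` is eventually close to
`μ² / λ`, and `λ > μ` is arbitrary.
-/

theorem exists_tendsto_rpow_of_submultiplicative {u : ℕ → ℕ}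
    (hu : ∀ m n, u (m + n) ≤ u m * u n) :
    ∃ μ : ℝ, (∀ n ≠ 0, μ ^ n ≤ u n) ∧
      Tendsto (fun n : ℕ => (u n : ℝ) ^ (1 / (n : ℝ))) atTop (𝓝 μ) := by
  by_cases hzero : ∃ N, u N = 0
  · obtain ⟨N, hN⟩ := hzero
    refine ⟨0, fun n hn => by simp [zero_pow hn], tendsto_const_nhds.congr' ?_⟩
    filter_upwards [eventually_gt_atTop N] with n hn
    obtain ⟨j, rfl⟩ := Nat.exists_eq_add_of_le hn.le
    have : u (N + j) = 0 := Nat.eq_zero_of_le_zero (by simpa [hN] using hu N j)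
    rw [this, Nat.cast_zero, Real.zero_rpow (one_div_ne_zero (by norm_cast; omega))]
  · simp only [not_exists] at hzero
    have hpos n : (0 : ℝ) < u n := by exact_mod_cast Nat.pos_of_ne_zero (hzero n)
    have hsub : Subadditive fun n => Real.log (u n) := fun m n => by
      rw [← Real.log_mul (hpos m).ne' (hpos n).ne']
      exact Real.log_le_log (hpos _) (by exact_mod_cast hu m n)
    have hbdd : BddBelow (Set.range fun n => Real.log (u n) / n) :=
      ⟨0, Set.forall_mem_range.2 fun n =>
        div_nonneg (Real.log_nonneg (by exact_mod_cast hpos n)) n.cast_nonneg⟩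
    refine ⟨Real.exp hsub.lim, fun n hn => ?_, ?_⟩
    · rw [← Real.exp_nat_mul, ← Real.exp_log (hpos n)]
      exact Real.exp_le_exp.2 ((le_div_iff₀' (by positivity)).1 (hsub.lim_le_div hbdd hn))
    · refine ((Real.continuous_exp.tendsto _).comp (hsub.tendsto_lim hbdd)).congr fun n => ?_
      rw [Function.comp_apply, Real.rpow_def_of_pos (hpos n), mul_one_div]

theorem exists_le_mul_pow_of_tendsto_rpow {u : ℕ → ℝ} {μ l : ℝ} (hu : ∀ n, 0 ≤ u n)
    (h : Tendsto (fun n : ℕ => u n ^ (1 / (n : ℝ))) atTop (𝓝 μ)) (hμl : μ < l) :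
    ∃ C > 0, ∀ n, u n ≤ C * l ^ n := by
  have hl : 0 < l := by
    obtain ⟨n, hn⟩ := (h.eventually_lt_const hμl).exists
    exact (Real.rpow_nonneg (hu n) _).trans_lt hn
  have hev : ∀ᶠ n : ℕ in atTop, u n ≤ l ^ n := by
    filter_upwards [h.eventually_lt_const hμl, eventually_ne_atTop 0] with n hn hn0
    rw [one_div] at hn
    calc u n = (u n ^ ((n : ℝ)⁻¹)) ^ n := (Real.rpow_inv_natCast_pow (hu n) hn0).symm
      _ ≤ l ^ n := pow_le_pow_left₀ (Real.rpow_nonneg (hu n) _) hn.le n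
  have hO : u =O[atTop] fun n => l ^ n := Asymptotics.IsBigO.of_bound 1 (by
    filter_upwards [hev] with n hn
    simpa [abs_of_nonneg (hu n), abs_of_pos hl] using hn)
  obtain ⟨C, hC0, hC⟩ := Asymptotics.bound_of_isBigO_nat_atTop hO
  refine ⟨C, hC0, fun n => ?_⟩
  simpa [abs_of_nonneg (hu n), abs_of_pos hl] using hC (pow_pos hl n).ne'

theorem tendsto_rpow_of_le_of_pow_le {a b : ℕ → ℝ} {μ : ℝ} (ha : ∀ n, 0 ≤ a n)
    (hab : ∀ n, a n ≤ b n) (hb : Tendsto (fun n : ℕ => b n ^ (1 / (n : ℝ))) atTop (𝓝 μ))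
    (hlow : ∀ r, 0 < r → r < μ → ∃ K > 0, ∀ᶠ n : ℕ in atTop, r ^ n ≤ K * n * a n) :
    Tendsto (fun n : ℕ => a n ^ (1 / (n : ℝ))) atTop (𝓝 μ) := by
  rw [tendsto_order]
  refine ⟨fun c hc => ?_, fun c hc => ?_⟩
  · rcases lt_or_ge c 0 with hc0 | hc0
    · exact Eventually.of_forall fun n => hc0.trans_le (Real.rpow_nonneg (ha n) _)
    have hr : 0 < (c + μ) / 2 := by linarith
    obtain ⟨K, hK, hKa⟩ := hlow ((c + μ) / 2) hr (by linarith)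
    have hroot : Tendsto (fun n : ℕ => (K * n) ^ (1 / (n : ℝ))) atTop (𝓝 1) := by
      have hK1 : Tendsto (fun n : ℕ => K ^ (1 / (n : ℝ))) atTop (𝓝 1) := by
        simpa using tendsto_const_nhds.rpow tendsto_one_div_atTop_nhds_zero_nat (Or.inl hK.ne')
      simpa [Real.mul_rpow hK.le] using
        hK1.mul (tendsto_rpow_div.comp tendsto_natCast_atTop_atTop)
    have hlim := (tendsto_const_nhds (x := (c + μ) / 2)).div hroot one_ne_zero
    rw [div_one] at hlim
    filter_upwards [hlim.eventually_const_lt (by linarith : c < (c + μ) / 2), hKa,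
      eventually_ne_atTop 0] with n hn hKn hn0
    calc c < (c + μ) / 2 / (K * n) ^ (1 / (n : ℝ)) := hn
      _ = (((c + μ) / 2) ^ n / (K * n)) ^ (1 / (n : ℝ)) := by
        rw [Real.div_rpow (by positivity) (by positivity), one_div,
          Real.pow_rpow_inv_natCast hr.le hn0]
      _ ≤ a n ^ (1 / (n : ℝ)) :=
        Real.rpow_le_rpow (by positivity) ((div_le_iff₀' (by positivity)).2 hKn) (by positivity)
  · filter_upwards [hb.eventually_lt_const hc] with n hn
    exact (Real.rpow_le_rpow (ha n) (hab n) (by positivity)).trans_lt hn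

namespace SimpleGraph

variable {V V' : Type*} {G : SimpleGraph V} {G' : SimpleGraph V'}

namespace Walk

variable {u v w x : V}

theorem sigma_ext_getVert {p : G.Walk v u} {q : G.Walk v w} (hl : p.length = q.length)
    (h : ∀ i, p.getVert i = q.getVert i) : (⟨u, p⟩ : Σ u, G.Walk v u) = ⟨w, q⟩ := by
  obtain rfl : u = w := by rw [← p.getVert_length, ← q.getVert_length, h, hl]
  rw [ext_getVert h]

theorem IsPath.append {p : G.Walk u v} {q : G.Walk v w} (hp : p.IsPath) (hq : q.IsPath)
    (h : ∀ x ∈ p.support, x ∈ q.support → x = v) : (p.append q).IsPath := by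
  have hq' := hq.support_nodup
  rw [← cons_tail_support, List.nodup_cons] at hq'
  rw [isPath_def, support_append, List.nodup_append]
  refine ⟨hp.support_nodup, hq'.2, fun x hxp y hyq hxy => ?_⟩
  subst hxy
  obtain rfl := h x hxp (List.mem_of_mem_tail hyq)
  exact hq'.1 hyq

theorem IsPath.exists_take_append_isPath {γ : G.Walk v w} (hγ : γ.IsPath) {S : Set V}
    (hw : w ∈ S) :
    ∃ s ≤ γ.length, γ.getVert s ∈ S ∧ ∀ {z} (q : G.Walk (γ.getVert s) z), q.IsPath →
      (∀ y ∈ q.support, y ∈ S) → ((γ.take s).append q).IsPath := by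
  classical
  have hex : ∃ s, γ.getVert s ∈ S := ⟨γ.length, by rwa [getVert_length]⟩
  refine ⟨Nat.find hex, Nat.find_min' hex (by rwa [getVert_length]), Nat.find_spec hex,
    fun q hq hqS => (hγ.take _).append hq fun x hx hxq => ?_⟩
  obtain ⟨i, rfl, -⟩ := mem_support_iff_exists_getVert.1 hx
  rw [take_getVert] at hxq ⊢
  rw [(min_le_left _ _).antisymm (Nat.find_min' hex (hqS _ hxq))]

theorem getVert_append_eq_ite (F : G.Walk v x) (A : G.Walk w x) (B : G.Walk x u) (j : ℕ) :
    (A.append B).getVert j =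
      if j ≤ A.length then (F.append A.reverse).getVert (F.length + (A.length - j))
      else (F.append B).getVert (F.length + (j - A.length)) := by
  have hF {y} (q : G.Walk x y) (i : ℕ) : (F.append q).getVert (F.length + i) = q.getVert i := by
    simp [getVert_append]
  rw [getVert_append', hF, hF]
  split_ifs with hj
  · rw [getVert_reverse, Nat.sub_sub_self hj]
  · rfl

end Walk

abbrev SAW (G : SimpleGraph V) (v : V) (n : ℕ) :=
  {p : Σ u : V, G.Walk v u // p.2.IsPath ∧ p.2.length = n}

theorem SAW.ext {v : V} {n : ℕ} {a b : G.SAW v n}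
    (h : ∀ i, a.1.2.getVert i = b.1.2.getVert i) : a = b :=
  Subtype.ext (Walk.sigma_ext_getVert (a.2.2.trans b.2.2.symm) h)

theorem finite_walk_length [G.LocallyFinite] (n : ℕ) (v : V) :
    Finite {p : Σ u : V, G.Walk v u // p.2.length = n} := by
  induction n generalizing v with
  | zero =>
    refine Finite.of_surjective (fun _ : Unit => ⟨⟨v, .nil⟩, rfl⟩) ?_
    rintro ⟨⟨u, p⟩, hp⟩
    cases p with
    | nil => exact ⟨(), rfl⟩
    | cons => simp at hp
  | succ n ih =>
    refine Finite.of_surjective (fun x : Σ w : G.neighborSet v,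
        {p : Σ u : V, G.Walk w u // p.2.length = n} =>
      (⟨⟨x.2.1.1, .cons x.1.2 x.2.1.2⟩, congrArg Nat.succ x.2.2⟩ :
        {p : Σ u : V, G.Walk v u // p.2.length = n + 1})) ?_
    rintro ⟨⟨u, p⟩, hp⟩
    cases p with
    | nil => simp at hp
    | cons h q => exact ⟨⟨⟨_, h⟩, ⟨⟨u, q⟩, by simpa using hp⟩⟩, rfl⟩

instance [G.LocallyFinite] (v : V) (n : ℕ) : Finite (G.SAW v n) :=
  have := finite_walk_length (G := G) n v
  Finite.of_injective _ (Subtype.impEmbedding _ _ fun _ h => h.2).injective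

theorem sawCount_eq_card (v : V) (n : ℕ) : sawCount G v n = Nat.card (G.SAW v n) := rfl

theorem sawCount_iso (φ : G ≃g G') (v : V) (n : ℕ) : sawCount G' (φ v) n = sawCount G v n :=
  Nat.card_congr
    { toFun := fun π => ⟨⟨φ.symm π.1.1, (π.1.2.map φ.symm.toHom).copy (φ.symm_apply_apply v) rfl⟩,
        by simpa using π.2.1.map φ.symm.injective, by simp [π.2.2]⟩
      invFun := fun π => ⟨⟨φ π.1.1, π.1.2.map φ.toHom⟩, π.2.1.map φ.injective, by simp [π.2.2]⟩
      left_inv := fun π => SAW.ext fun i => by simp [Walk.getVert_map, -Walk.map_map]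
      right_inv := fun π => SAW.ext fun i => by simp [Walk.getVert_map, -Walk.map_map] }

theorem sawCount_add_le_mul [G.LocallyFinite] {n B : ℕ} (hB : ∀ u, sawCount G u n ≤ B)
    (v : V) (m : ℕ) : sawCount G v (m + n) ≤ sawCount G v m * B := by
  let split (π : G.SAW v (m + n)) : Σ p : G.SAW v m, G.SAW p.1.1 n :=
    ⟨⟨⟨_, π.1.2.take m⟩, π.2.1.take m, by simp [π.2.2]⟩,
      ⟨⟨_, π.1.2.drop m⟩, π.2.1.drop m, by simp [π.2.2]⟩⟩
  have hsplit : split.Injective := fun π π' h => SAW.ext fun j => by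
    rcases le_total j m with hj | hj
    · simpa [split, min_eq_right hj] using congrArg (fun z => z.1.1.2.getVert j) h
    · simpa [split, Nat.add_sub_cancel' hj] using congrArg (fun z => z.2.1.2.getVert (j - m)) h
  have := Fintype.ofFinite (G.SAW v m)
  calc sawCount G v (m + n) ≤ Nat.card (Σ p : G.SAW v m, G.SAW p.1.1 n) :=
        Nat.card_le_card_of_injective split hsplit
    _ = ∑ p : G.SAW v m, sawCount G p.1.1 n := Nat.card_sigma
    _ ≤ ∑ _p : G.SAW v m, B := Finset.sum_le_sum fun p _ => hB _
    _ = sawCount G v m * B := by simp [sawCount_eq_card, Nat.card_eq_fintype_card]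

theorem exists_saw_pair_of_isPath {v w : V} {γ : G.Walk v w} (hγ : γ.IsPath) {n : ℕ}
    (π : G.SAW w n) :
    ∃ s ≤ γ.length, ∃ k ≤ n, ∃ (ρ : G.SAW v (s + k)) (ρ' : G.SAW v (s + (n - k))), ∀ j,
      π.1.2.getVert j =
        if j ≤ k then ρ.1.2.getVert (s + (k - j)) else ρ'.1.2.getVert (s + (j - k)) := by
  classical
  obtain ⟨s, hs, hmem, hpath⟩ :=
    hγ.exists_take_append_isPath (S := {y | y ∈ π.1.2.support}) π.1.2.start_mem_support
  set A := π.1.2.takeUntil _ hmem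
  set B := π.1.2.dropUntil _ hmem
  have hF : (γ.take s).length = s := by simp [hs]
  have hAB : A.length + B.length = n := by rw [← Walk.length_append, Walk.take_spec, π.2.2]
  refine ⟨s, hs, A.length, by omega,
    ⟨⟨_, (γ.take s).append A.reverse⟩, hpath _ (π.2.1.takeUntil _).reverse fun y hy =>
      π.1.2.support_takeUntil_subset_support _ (by simpa using hy), by simp [hF]⟩,
    ⟨⟨_, (γ.take s).append B⟩, hpath _ (π.2.1.dropUntil _) fun y hy =>
      π.1.2.support_dropUntil_subset_support _ hy, by simp [hF]; omega⟩, fun j => ?_⟩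
  have := Walk.getVert_append_eq_ite (γ.take s) A B j
  rwa [Walk.take_spec, hF] at this

theorem sawCount_le_sum_of_isPath [G.LocallyFinite] {v w : V} {γ : G.Walk v w}
    (hγ : γ.IsPath) (n : ℕ) :
    sawCount G w n ≤ ∑ s ∈ Finset.range (γ.length + 1), ∑ k ∈ Finset.range (n + 1),
      sawCount G v (s + k) * sawCount G v (s + (n - k)) := by
  choose s hs k hk ρ ρ' hρ using fun π : G.SAW w n => exists_saw_pair_of_isPath hγ π
  let encode (π : G.SAW w n) : Σ sk : Fin (γ.length + 1) × Fin (n + 1),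
      G.SAW v (sk.1 + sk.2) × G.SAW v (sk.1 + (n - sk.2)) :=
    ⟨(⟨s π, Nat.lt_succ_of_le (hs π)⟩, ⟨k π, Nat.lt_succ_of_le (hk π)⟩), ρ π, ρ' π⟩
  have hencode : encode.Injective := fun π π' h => SAW.ext fun j => by
    have hsk := congrArg Sigma.fst h
    simp only [encode, Prod.mk.injEq, Fin.mk.injEq] at hsk
    have hρ₁ i := congrArg (fun z => z.2.1.1.2.getVert i) h
    have hρ₂ i := congrArg (fun z => z.2.2.1.2.getVert i) h
    rw [hρ π, hρ π']
    split_ifs with h₁ h₂ h₂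
    · rw [show s π' + (k π' - j) = s π + (k π - j) by omega]
      exact hρ₁ _
    · omega
    · omega
    · rw [show s π' + (j - k π') = s π + (j - k π) by omega]
      exact hρ₂ _
  calc sawCount G w n ≤ Nat.card (Σ sk : Fin (γ.length + 1) × Fin (n + 1),
        G.SAW v (sk.1 + sk.2) × G.SAW v (sk.1 + (n - sk.2))) :=
        Nat.card_le_card_of_injective encode hencode
    _ = _ := by
      simp only [Nat.card_sigma, Fintype.sum_prod_type, Nat.card_prod, ← sawCount_eq_card,
        Finset.sum_range]

section QuasiTransitive

variable {W : Finset V} (hW : ∀ v : V, ∃ φ : G ≃g G, φ v ∈ W)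
include hW

theorem range_sawCount_subset_image (n : ℕ) :
    Set.range (fun v => sawCount G v n) ⊆ (fun w => sawCount G w n) '' W := by
  rintro _ ⟨v, rfl⟩
  obtain ⟨φ, hφ⟩ := hW v
  exact ⟨φ v, hφ, sawCount_iso φ v n⟩

theorem bddAbove_range_sawCount (n : ℕ) : BddAbove (Set.range fun v => sawCount G v n) :=
  ((W.finite_toSet.image _).subset (range_sawCount_subset_image hW n)).bddAbove

theorem sawCount_le_sawSup (v : V) (n : ℕ) : sawCount G v n ≤ sawSup G n :=
  le_csSup (bddAbove_range_sawCount hW n) ⟨v, rfl⟩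

theorem exists_mem_sawCount_eq_sawSup [Nonempty V] (n : ℕ) :
    ∃ w ∈ W, sawCount G w n = sawSup G n :=
  range_sawCount_subset_image hW n <|
    Nat.sSup_mem (Set.range_nonempty _) (bddAbove_range_sawCount hW n)

theorem sawSup_add_le [G.LocallyFinite] (m n : ℕ) : sawSup G (m + n) ≤ sawSup G m * sawSup G n :=
  csSup_le' <| Set.forall_mem_range.2 fun v =>
    (sawCount_add_le_mul (sawCount_le_sawSup hW · n) v m).trans
      (Nat.mul_le_mul_right _ (sawCount_le_sawSup hW v m))

theorem sawCount_mul_sawCount_le [G.LocallyFinite] {C l : ℝ}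
    (hC : ∀ n, (sawSup G n : ℝ) ≤ C * l ^ n) (v : V) {a b m : ℕ} (hm : m ≤ a ∨ m ≤ b) :
    (sawCount G v a * sawCount G v b : ℝ) ≤ C ^ 2 * l ^ (a + b - m) * sawCount G v m := by
  wlog hma : m ≤ a generalizing a b
  · rw [mul_comm, add_comm]
    exact this hm.symm (hm.resolve_left hma)
  obtain ⟨j, rfl⟩ := Nat.exists_eq_add_of_le hma
  have ha : (sawCount G v (m + j) : ℝ) ≤ sawCount G v m * (C * l ^ j) :=
    (Nat.cast_le.2 (sawCount_add_le_mul (sawCount_le_sawSup hW · j) v m)).trans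
      (by push_cast; gcongr; exact hC j)
  have hb : (sawCount G v b : ℝ) ≤ C * l ^ b :=
    (Nat.cast_le.2 (sawCount_le_sawSup hW v b)).trans (hC b)
  calc (sawCount G v (m + j) * sawCount G v b : ℝ)
      ≤ sawCount G v m * (C * l ^ j) * (C * l ^ b) :=
        mul_le_mul ha hb (by positivity) ((Nat.cast_nonneg _).trans ha)
    _ = C ^ 2 * l ^ (m + j + b - m) * sawCount G v m := by
        rw [show m + j + b - m = j + b by omega, pow_add]; ring

theorem sawSup_two_mul_le [G.LocallyFinite] (hconn : G.Connected) {C l : ℝ}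
    (hC : ∀ n, (sawSup G n : ℝ) ≤ C * l ^ n) (hl : 1 ≤ l) (v : V) (m : ℕ) :
    (sawSup G (2 * m) : ℝ) ≤
      ((W.sup (G.dist v) + 1) * (2 * m + 1) * C ^ 2 * l ^ (m + 2 * W.sup (G.dist v)) :) *
        sawCount G v m := by
  have : Nonempty V := ⟨v⟩
  obtain ⟨w, hwW, hw⟩ := exists_mem_sawCount_eq_sawSup hW (2 * m)
  obtain ⟨γ, hγ, hγl⟩ := hconn.exists_path_of_dist v w
  have hγD : γ.length ≤ W.sup (G.dist v) := hγl ▸ Finset.le_sup hwW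
  have hterm {s k} (hs : s ∈ Finset.range (γ.length + 1)) (hk : k ∈ Finset.range (2 * m + 1)) :
      (sawCount G v (s + k) * sawCount G v (s + (2 * m - k)) : ℝ) ≤
        C ^ 2 * l ^ (m + 2 * W.sup (G.dist v)) * sawCount G v m := by
    simp only [Finset.mem_range] at hs hk
    refine (sawCount_mul_sawCount_le hW hC v (m := m) (by omega)).trans ?_
    gcongr
    omega
  calc (sawSup G (2 * m) : ℝ) = sawCount G w (2 * m) := by rw [hw]
    _ ≤ ∑ s ∈ Finset.range (γ.length + 1), ∑ k ∈ Finset.range (2 * m + 1),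
          (sawCount G v (s + k) * sawCount G v (s + (2 * m - k)) : ℝ) := by
        exact_mod_cast sawCount_le_sum_of_isPath hγ (2 * m)
    _ ≤ ∑ s ∈ Finset.range (γ.length + 1), ∑ k ∈ Finset.range (2 * m + 1),
          C ^ 2 * l ^ (m + 2 * W.sup (G.dist v)) * sawCount G v m :=
        Finset.sum_le_sum fun s hs => Finset.sum_le_sum fun k hk => hterm hs hk
    _ ≤ _ := by
        simp only [Finset.sum_const, Finset.card_range, nsmul_eq_mul]
        push_cast
        rw [← mul_assoc, ← mul_assoc, ← mul_assoc]
        gcongr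

theorem eventually_pow_le_mul_sawCount [G.LocallyFinite] (hconn : G.Connected) {μ : ℝ}
    (hμ : ∀ n ≠ 0, μ ^ n ≤ sawSup G n)
    (hΛ : Tendsto (fun n : ℕ => (sawSup G n : ℝ) ^ (1 / (n : ℝ))) atTop (𝓝 μ)) (v : V)
    {r : ℝ} (hr : 0 < r) (hrμ : r < μ) :
    ∃ K > 0, ∀ᶠ n : ℕ in atTop, r ^ n ≤ K * n * sawCount G v n := by
  have hμ1 : 1 ≤ μ := by
    refine ge_of_tendsto hΛ ?_
    filter_upwards [eventually_ne_atTop 0] with n hn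
    have hpos : (0 : ℝ) < sawSup G n := (pow_pos (hr.trans hrμ) n).trans_le (hμ n hn)
    exact Real.one_le_rpow (Nat.one_le_cast.2 (Nat.cast_pos.1 hpos)) (by positivity)
  set l := μ ^ 2 / r
  have hμl : μ < l := by rw [lt_div_iff₀ hr]; nlinarith
  obtain ⟨C, hC0, hC⟩ := exists_le_mul_pow_of_tendsto_rpow (fun n => Nat.cast_nonneg _) hΛ hμl
  set D := W.sup (G.dist v)
  refine ⟨3 * (D + 1) * C ^ 2 * l ^ (2 * D), by positivity, ?_⟩
  filter_upwards [eventually_ne_atTop 0] with m hm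
  have hm1 : (1 : ℝ) ≤ m := Nat.one_le_cast.2 (Nat.pos_of_ne_zero hm)
  refine le_of_mul_le_mul_right ?_ (pow_pos (by linarith : 0 < l) m)
  calc r ^ m * l ^ m = μ ^ (2 * m) := by
        rw [← mul_pow, pow_mul, mul_div_cancel₀ _ hr.ne']
    _ ≤ sawSup G (2 * m) := hμ _ (by omega)
    _ ≤ ((D + 1) * (2 * m + 1) * C ^ 2 * l ^ (m + 2 * D) :) * sawCount G v m :=
        sawSup_two_mul_le hW hconn hC (by linarith) v m
    _ ≤ 3 * (D + 1) * C ^ 2 * l ^ (2 * D) * m * sawCount G v m * l ^ m := by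
        rw [pow_add]
        convert_to _ ≤ ((D + 1) * (3 * m) * C ^ 2 * (l ^ m * l ^ (2 * D)) :) * sawCount G v m
        · ring
        gcongr
        linarith

end QuasiTransitive

end SimpleGraph

open SimpleGraph in
theorem tendsto_sawCount_rpow_of_quasiTransitive_general
    {V : Type*} (G : SimpleGraph V)
    (hconn : G.Connected)
    (hdeg : ∀ v : V, (G.neighborSet v).Finite)
    (hquasi : ∃ W : Finset V, ∀ v : V, ∃ φ : G ≃g G, φ v ∈ W) :
    ∃ μ : ℝ,
      (∀ v : V,
        Filter.Tendsto (fun n : ℕ => (sawCount G v n : ℝ) ^ (1 / (n : ℝ)))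
          Filter.atTop (nhds μ)) ∧
      Filter.Tendsto (fun n : ℕ => (sawSup G n : ℝ) ^ (1 / (n : ℝ)))
        Filter.atTop (nhds μ) := by
  obtain ⟨W, hW⟩ := hquasi
  let : G.LocallyFinite := fun v => (hdeg v).fintype
  obtain ⟨μ, hμ, hΛ⟩ := exists_tendsto_rpow_of_submultiplicative (sawSup_add_le hW)
  refine ⟨μ, fun v => ?_, hΛ⟩
  exact tendsto_rpow_of_le_of_pow_le (fun n => Nat.cast_nonneg _)
    (fun n => Nat.cast_le.2 (sawCount_le_sawSup hW v n)) hΛ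
    fun r hr hrμ => eventually_pow_le_mul_sawCount hW hconn hμ hΛ v hr hrμ

theorem tendsto_sawCount_rpow_of_quasiTransitive
    {V : Type*} (G : SimpleGraph V)
    (hinf : Infinite V) (hconn : G.Connected)
    (hdeg : ∀ v : V, (G.neighborSet v).Finite)
    (hquasi : ∃ W : Finset V, ∀ v : V, ∃ φ : G ≃g G, φ v ∈ W) :
    ∃ μ : ℝ,
      (∀ v : V,
        Filter.Tendsto (fun n : ℕ => (sawCount G v n : ℝ) ^ (1 / (n : ℝ)))
          Filter.atTop (nhds μ)) ∧
      Filter.Tendsto (fun n : ℕ => (sawSup G n : ℝ) ^ (1 / (n : ℝ)))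
        Filter.atTop (nhds μ) :=
  tendsto_sawCount_rpow_of_quasiTransitive_general G hconn hdeg hquasi
end

section
/- Let G be an infinite, connected simple graph with finite vertex-degrees, and assume there exists a vertex v with limsup_{n→∞} σ_n(v)^{1/n} < ∞. Then limsup_{n→∞} σ_n(u)^{1/n} = limsup_{n→∞} σ_n(v)^{1/n} for all vertices u and v. -/
open Filter Topology
open scoped ENNReal

/-- `limsup_{n→∞} σ_n(v)^{1/n}`, computed in `ℝ≥0∞`. -/
noncomputable def sawLimsup {V : Type*} (G : SimpleGraph V) (v : V) : ℝ≥0∞ :=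
  Filter.limsup (fun n : ℕ => (sawCount G v n : ℝ≥0∞) ^ (1 / (n : ℝ))) Filter.atTop

/-!
If `u` and `v` are adjacent, an `n`-step self-avoiding walk from `v` either avoids `u`, and then
prepending the edge `uv` makes it an `(n+1)`-step self-avoiding walk from `u`, or it passes
through `u`, and then cutting it there and reversing the first piece gives two self-avoiding
walks from `u` of total length `n`. Hence `σ_n(v) ≤ σ_{n+1}(u) + ∑_{i+j=n} σ_i(u) σ_j(u)`. For every `a`
above the growth rate of `u` we have `σ_k(u) ≤ C a^k`, so `σ_n(v) ≤ C' (n+1) a^n` and the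
growth rate of `v` is at most `a`. By symmetry neighbours have the same growth rate, and
connectedness spreads this to all vertices. Local finiteness makes every `σ_n` the size of a
finite set; otherwise `Nat.card` would return `0`.
-/

open SimpleGraph Finset

theorem tendsto_natCast_rpow_two_div :
    Tendsto (fun n : ℕ => (n : ℝ≥0∞) ^ (2 / (n : ℝ))) atTop (𝓝 1) := by
  have h := ENNReal.tendsto_ofReal
    ((tendsto_rpow_div_mul_add 2 1 0 zero_ne_one).comp tendsto_natCast_atTop_atTop)
  simp only [Function.comp_def, one_mul, add_zero, ENNReal.ofReal_one] at h
  refine h.congr fun n => ?_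
  rw [← ENNReal.ofReal_rpow_of_nonneg n.cast_nonneg (by positivity), ENNReal.ofReal_natCast]

theorem eventually_mul_add_one_le_sq {C : ℝ≥0∞} (hC : C ≠ ⊤) :
    ∀ᶠ n : ℕ in atTop, C * (n + 1) ≤ (n : ℝ≥0∞) ^ 2 := by
  obtain ⟨M, hM⟩ := ENNReal.exists_nat_gt hC
  filter_upwards [eventually_ge_atTop (2 * M + 1)] with n hn
  calc C * (n + 1) ≤ M * (n + 1) := by gcongr
    _ = ((M * (n + 1) : ℕ) : ℝ≥0∞) := by push_cast; rfl
    _ ≤ ((n ^ 2 : ℕ) : ℝ≥0∞) := by gcongr; nlinarith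
    _ = (n : ℝ≥0∞) ^ 2 := by push_cast; rfl

theorem limsup_rpow_le_of_le_mul_pow {f : ℕ → ℝ≥0∞} {C a : ℝ≥0∞} (hC : C ≠ ⊤)
    (hf : ∀ n, f n ≤ C * (n + 1) * a ^ n) :
    limsup (fun n : ℕ => f n ^ (1 / (n : ℝ))) atTop ≤ a := by
  have hev : ∀ᶠ n : ℕ in atTop, f n ^ (1 / (n : ℝ)) ≤ (n : ℝ≥0∞) ^ (2 / (n : ℝ)) * a := by
    filter_upwards [eventually_mul_add_one_le_sq hC, eventually_gt_atTop 0] with n hCn hn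
    have hn' : (0 : ℝ) < n := by exact_mod_cast hn
    rw [one_div, ENNReal.rpow_inv_le_iff hn', ENNReal.mul_rpow_of_nonneg _ _ hn'.le,
      ← ENNReal.rpow_mul, div_mul_cancel₀ _ hn'.ne', ENNReal.rpow_natCast, ENNReal.rpow_two]
    calc f n ≤ C * (n + 1) * a ^ n := hf n
      _ ≤ (n : ℝ≥0∞) ^ 2 * a ^ n := by gcongr
  have hlim : Tendsto (fun n : ℕ => (n : ℝ≥0∞) ^ (2 / (n : ℝ)) * a) atTop (𝓝 a) := by
    simpa using ENNReal.Tendsto.mul_const tendsto_natCast_rpow_two_div (Or.inl one_ne_zero)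
  exact (limsup_le_limsup hev).trans_eq hlim.limsup_eq

theorem exists_le_mul_pow_of_limsup_rpow_lt {f : ℕ → ℕ} {a : ℝ≥0∞} (ha : a ≠ ⊤)
    (hf : limsup (fun n : ℕ => (f n : ℝ≥0∞) ^ (1 / (n : ℝ))) atTop < a) :
    ∃ C ≠ ⊤, ∀ n, (f n : ℝ≥0∞) ≤ C * a ^ n := by
  have ha0 : a ≠ 0 := (pos_of_gt hf).ne'
  obtain ⟨N, hN⟩ := eventually_atTop.1 (eventually_lt_of_limsup_lt hf)
  refine ⟨1 + ∑ k ∈ range (N + 1), (f k : ℝ≥0∞) / a ^ k, ?_, fun n => ?_⟩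
  · refine ENNReal.add_ne_top.2 ⟨ENNReal.one_ne_top, ENNReal.sum_ne_top.2 fun k _ => ?_⟩
    exact ENNReal.div_ne_top (ENNReal.natCast_ne_top _) (pow_ne_zero _ ha0)
  rcases le_or_gt n N with hn | hn
  · calc (f n : ℝ≥0∞) = f n / a ^ n * a ^ n :=
          (ENNReal.div_mul_cancel (pow_ne_zero _ ha0) (ENNReal.pow_ne_top ha)).symm
      _ ≤ _ := by
          gcongr
          exact le_add_left (single_le_sum (f := fun k => (f k : ℝ≥0∞) / a ^ k)
            (fun _ _ => zero_le) (mem_range.2 (Nat.lt_succ_of_le hn)))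
  · have hn' : (0 : ℝ) < n := by exact_mod_cast (N.zero_le.trans_lt hn)
    have hfn := hN n hn.le
    rw [one_div, ENNReal.rpow_inv_lt_iff hn', ENNReal.rpow_natCast] at hfn
    exact hfn.le.trans (le_mul_of_one_le_left' le_self_add)

section

variable {V : Type*} {G : SimpleGraph V}

abbrev SelfAvoidingWalk (G : SimpleGraph V) (v : V) (n : ℕ) : Type _ :=
  {p : Σ u : V, G.Walk v u // p.2.IsPath ∧ p.2.length = n}

theorem finite_walks_of_length [G.LocallyFinite] (v : V) (n : ℕ) :
    Finite {p : Σ u : V, G.Walk v u // p.2.length = n} := by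
  induction n generalizing v with
  | zero =>
    have : Subsingleton {p : Σ u : V, G.Walk v u // p.2.length = 0} := ⟨by
      rintro ⟨⟨u, p⟩, hp⟩ ⟨⟨u', p'⟩, hp'⟩
      cases p <;> cases p'
      · rfl
      all_goals simp at hp hp'⟩
    infer_instance
  | succ n ih =>
    refine Finite.of_surjective
      (α := Σ w : G.neighborSet v, {p : Σ u : V, G.Walk w u // p.2.length = n})
      (fun q => ⟨⟨q.2.1.1, .cons q.1.2 q.2.1.2⟩, congrArg (· + 1) q.2.2⟩) ?_
    rintro ⟨⟨u, _ | ⟨h, p⟩⟩, hp⟩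
    · simp at hp
    · exact ⟨⟨⟨_, h⟩, ⟨u, p⟩, by simpa using hp⟩, rfl⟩

instance [G.LocallyFinite] (v : V) (n : ℕ) : Finite (SelfAvoidingWalk G v n) :=
  have := finite_walks_of_length (G := G) v n
  Finite.of_injective (fun p => (⟨p.1, p.2.2⟩ : {p : Σ u : V, G.Walk v u // p.2.length = n}))
    fun _ _ h => Subtype.ext (Subtype.mk.inj h)

def splitAtNeighbor [DecidableEq V] {u v : V} (hadj : G.Adj u v) {n : ℕ}
    (p : SelfAvoidingWalk G v n) :
    SelfAvoidingWalk G u (n + 1) ⊕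
      Σ ij : antidiagonal n, SelfAvoidingWalk G u ij.1.1 × SelfAvoidingWalk G u ij.1.2 :=
  if h : u ∈ p.1.2.support then
    .inr ⟨⟨((p.1.2.takeUntil u h).length, (p.1.2.dropUntil u h).length), by
        rw [Finset.HasAntidiagonal.mem_antidiagonal, ← Walk.length_append, Walk.take_spec, p.2.2]⟩,
      ⟨⟨v, (p.1.2.takeUntil u h).reverse⟩, (p.2.1.takeUntil h).reverse, Walk.length_reverse _⟩,
      ⟨⟨p.1.1, p.1.2.dropUntil u h⟩, p.2.1.dropUntil h, rfl⟩⟩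
  else
    .inl ⟨⟨p.1.1, .cons hadj p.1.2⟩, p.2.1.cons h, by simp [p.2.2]⟩

theorem splitAtNeighbor_injective [DecidableEq V] {u v : V} (hadj : G.Adj u v) (n : ℕ) :
    Function.Injective (splitAtNeighbor (G := G) hadj (n := n)) := by
  rintro ⟨⟨x, p⟩, hp⟩ ⟨⟨x', p'⟩, hp'⟩ heq
  unfold splitAtNeighbor at heq
  split_ifs at heq with h h'
  · have e := congrArg (fun s => (s.2.1.1, s.2.2.1)) (Sum.inr.inj heq)
    simp only [Prod.mk.injEq, Sigma.mk.inj_iff, heq_eq_eq, true_and,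
      Walk.reverse_injective.eq_iff] at e
    obtain ⟨htake, rfl, hdrop⟩ := e
    rw [Subtype.mk.injEq, ← p.take_spec h, ← p'.take_spec h', htake, eq_of_heq hdrop]
  · obtain ⟨rfl, hcons⟩ := Sigma.mk.inj_iff.1 (Subtype.ext_iff.1 (Sum.inl.inj heq))
    simp only [heq_eq_eq, Walk.cons.injEq, true_and] at hcons
    subst hcons
    rfl

theorem sawCount_le_of_adj [G.LocallyFinite] {u v : V} (hadj : G.Adj u v) (n : ℕ) :
    sawCount G v n ≤
      sawCount G u (n + 1) + ∑ ij ∈ antidiagonal n, sawCount G u ij.1 * sawCount G u ij.2 := by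
  classical
  calc sawCount G v n ≤ Nat.card (SelfAvoidingWalk G u (n + 1) ⊕
        Σ ij : antidiagonal n, SelfAvoidingWalk G u ij.1.1 × SelfAvoidingWalk G u ij.1.2) :=
      Nat.card_le_card_of_injective _ (splitAtNeighbor_injective hadj n)
    _ = _ := by
      rw [Nat.card_sum, Nat.card_sigma, ← sum_coe_sort (antidiagonal n)]
      simp only [Nat.card_prod]
      rfl

theorem sawLimsup_le_of_adj [G.LocallyFinite] {u v : V} (hadj : G.Adj u v) :
    sawLimsup G v ≤ sawLimsup G u := by
  refine le_of_forall_gt_imp_ge_of_dense fun a ha => ?_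
  rcases eq_or_ne a ⊤ with rfl | ha_top
  · exact le_top
  obtain ⟨C, hC, hCa⟩ := exists_le_mul_pow_of_limsup_rpow_lt ha_top ha
  refine limsup_rpow_le_of_le_mul_pow (C := C * a + C * C) (by finiteness) fun n => ?_
  calc (sawCount G v n : ℝ≥0∞)
      ≤ sawCount G u (n + 1) +
          ∑ ij ∈ antidiagonal n, (sawCount G u ij.1 : ℝ≥0∞) * sawCount G u ij.2 := by
        exact_mod_cast sawCount_le_of_adj hadj n
    _ ≤ C * a ^ (n + 1) + ∑ ij ∈ antidiagonal n, C * a ^ ij.1 * (C * a ^ ij.2) := by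
        gcongr with ij <;> apply hCa
    _ = C * a * a ^ n + C * C * ((n + 1) * a ^ n) := by
        rw [sum_congr rfl fun ij hij => by
            rw [mul_mul_mul_comm, ← pow_add, HasAntidiagonal.mem_antidiagonal.1 hij],
          sum_const, Nat.card_antidiagonal, nsmul_eq_mul, pow_succ]
        push_cast
        ring
    _ ≤ C * a * ((n + 1) * a ^ n) + C * C * ((n + 1) * a ^ n) := by
        gcongr
        exact le_mul_of_one_le_left' le_add_self
    _ = (C * a + C * C) * (n + 1) * a ^ n := by ring

theorem sawLimsup_eq_of_adj [G.LocallyFinite] {u v : V} (hadj : G.Adj u v) :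
    sawLimsup G u = sawLimsup G v :=
  (sawLimsup_le_of_adj hadj.symm).antisymm (sawLimsup_le_of_adj hadj)

end

theorem sawLimsup_eq_of_finite_general
    {V : Type*} (G : SimpleGraph V)
    (hconn : G.Connected)
    (hdeg : ∀ v : V, (G.neighborSet v).Finite) :
    ∀ u v : V, sawLimsup G u = sawLimsup G v := by
  have : G.LocallyFinite := fun v => (hdeg v).fintype
  intro u v
  obtain ⟨w⟩ := hconn.preconnected u v
  induction w with
  | nil => rfl
  | cons hadj _ ih => exact (sawLimsup_eq_of_adj hadj).trans ih

theorem sawLimsup_eq_of_finite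
    {V : Type*} (G : SimpleGraph V)
    (hinf : Infinite V) (hconn : G.Connected)
    (hdeg : ∀ v : V, (G.neighborSet v).Finite)
    (hfin : ∃ v : V, sawLimsup G v < ⊤) :
    ∀ u v : V, sawLimsup G u = sawLimsup G v :=
  sawLimsup_eq_of_finite_general G hconn hdeg
end

section
/- Let G be a simple graph with finite vertex-degrees and let u, v be adjacent vertices. Then for every n ≥ 1, σ_n(u) ≤ σ_{n+1}(v) + Σ_{m=1}^{n−1} σ_m(v)·σ_{n−m}(v) + σ_n(v). -/
/-!
A self-avoiding walk of length `n` from `u` that avoids `v` becomes, after prepending the edge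
`vu`, a self-avoiding walk of length `n + 1` from `v`. One that visits `v` is cut there: the part
before `v`, reversed, and the part after it are self-avoiding walks from `v` of lengths `m ≥ 1`
and `n - m`, and together they determine the walk. This injection gives the bound; the walks
ending at `v` form the term `m = n`, which contributes `σ_n(v) σ_0(v) = σ_n(v)`.
-/

namespace SimpleGraph

variable {V : Type*} {G : SimpleGraph V}

namespace Walk

theorem sigma_eq_nil_of_length_eq_zero {w : V} {p : Σ x, G.Walk w x} (h : p.2.length = 0) :
    p = ⟨w, nil⟩ := by
  obtain ⟨x, _ | _⟩ := p
  · rfl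
  · simp at h

theorem length_takeUntil_add_length_dropUntil [DecidableEq V] {u v w : V} (p : G.Walk u v)
    (h : w ∈ p.support) : (p.takeUntil w h).length + (p.dropUntil w h).length = p.length := by
  rw [← length_append, take_spec]

theorem sigma_ext_of_takeUntil_of_dropUntil [DecidableEq V] {u v : V} {p q : Σ x, G.Walk u x}
    (hp : v ∈ p.2.support) (hq : v ∈ q.2.support) (htake : p.2.takeUntil v hp = q.2.takeUntil v hq)
    (hdrop : (⟨p.1, p.2.dropUntil v hp⟩ : Σ x, G.Walk v x) = ⟨q.1, q.2.dropUntil v hq⟩) :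
    p = q := by
  obtain ⟨x, p⟩ := p
  obtain ⟨y, q⟩ := q
  obtain ⟨rfl, hdrop⟩ := Sigma.mk.inj_iff.mp hdrop
  rw [← take_spec p hp, ← take_spec q hq, htake, eq_of_heq hdrop]

end Walk

theorem finite_walks_of_length [G.LocallyFinite] (w : V) (n : ℕ) :
    Finite {p : Σ x, G.Walk w x // p.2.length = n} := by
  induction n generalizing w with
  | zero =>
    have : Subsingleton {p : Σ x, G.Walk w x // p.2.length = 0} :=
      ⟨fun p q => Subtype.ext <| by
        rw [Walk.sigma_eq_nil_of_length_eq_zero p.2, Walk.sigma_eq_nil_of_length_eq_zero q.2]⟩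
    infer_instance
  | succ n ih =>
    have := ih
    refine Finite.of_surjective
      (fun q : Σ x : G.neighborSet w, {p : Σ y, G.Walk x y // p.2.length = n} =>
        ⟨⟨q.2.1.1, .cons q.1.2 q.2.1.2⟩, congrArg Nat.succ q.2.2⟩) ?_
    rintro ⟨⟨x, _ | ⟨hadj, p⟩⟩, hp⟩
    · simp at hp
    · exact ⟨⟨⟨_, hadj⟩, ⟨x, p⟩, by simpa using hp⟩, rfl⟩

variable (G) in
abbrev SelfAvoidingWalk (w : V) (n : ℕ) : Type _ :=
  {p : Σ x, G.Walk w x // p.2.IsPath ∧ p.2.length = n}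

instance [G.LocallyFinite] (w : V) (n : ℕ) : Finite (G.SelfAvoidingWalk w n) :=
  have := finite_walks_of_length (G := G) w n
  Finite.of_injective _ (Subtype.impEmbedding _ _ fun _ hp => hp.2).injective

namespace SelfAvoidingWalk

variable [DecidableEq V] {u v : V}

def splitAt (hvu : G.Adj v u) {n : ℕ} :
    G.SelfAvoidingWalk u n →
      G.SelfAvoidingWalk v (n + 1) ⊕
        Σ m : Finset.Ico 1 (n + 1), G.SelfAvoidingWalk v m × G.SelfAvoidingWalk v (n - m)
  | ⟨⟨x, p⟩, hp, hpn⟩ =>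
    if h : v ∈ p.support then
      have hsum : (p.takeUntil v h).length + (p.dropUntil v h).length = n :=
        (p.length_takeUntil_add_length_dropUntil h).trans hpn
      have hpos : (p.takeUntil v h).length ≠ 0 := fun h0 =>
        hvu.ne (Walk.eq_of_length_eq_zero h0).symm
      .inr ⟨⟨(p.takeUntil v h).length, Finset.mem_Ico.2 ⟨by omega, by omega⟩⟩,
        ⟨⟨u, (p.takeUntil v h).reverse⟩, (hp.takeUntil h).reverse, by simp⟩,
        ⟨⟨x, p.dropUntil v h⟩, hp.dropUntil h, by simp only; omega⟩⟩
    else .inl ⟨⟨x, .cons hvu p⟩, hp.cons h, by simp [hpn]⟩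

theorem splitAt_injective (hvu : G.Adj v u) (n : ℕ) :
    Function.Injective (splitAt hvu (n := n)) := by
  rintro ⟨⟨x, p⟩, _, _⟩ ⟨⟨y, q⟩, _, _⟩ h
  simp only [splitAt] at h
  split_ifs at h with hvp hvq hvq
  · have hpair := congrArg (fun s => (s.2.1.1, s.2.2.1)) (Sum.inr.inj h)
    simp only [Prod.mk.injEq, Sigma.mk.inj_iff, heq_eq_eq, true_and] at hpair
    exact Subtype.ext (Walk.sigma_ext_of_takeUntil_of_dropUntil hvp hvq
      (Walk.reverse_injective hpair.1) (Sigma.ext_iff.mpr hpair.2))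
  · obtain ⟨rfl, h⟩ := Sigma.mk.inj_iff.mp (congrArg Subtype.val (Sum.inl.inj h))
    obtain rfl : p = q := eq_of_heq (Walk.cons.inj (eq_of_heq h)).2
    rfl

end SelfAvoidingWalk

end SimpleGraph

open SimpleGraph

theorem sawCount_zero {V : Type*} (G : SimpleGraph V) (w : V) : sawCount G w 0 = 1 :=
  Nat.card_eq_one_iff_exists.mpr ⟨⟨⟨w, .nil⟩, .nil, rfl⟩, fun p =>
    Subtype.ext (Walk.sigma_eq_nil_of_length_eq_zero p.2.2)⟩

theorem sawCount_adj_ineq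
    {V : Type*} (G : SimpleGraph V)
    (hdeg : ∀ v : V, (G.neighborSet v).Finite)
    (u v : V) (hadj : G.Adj u v) :
    ∀ n : ℕ, 1 ≤ n →
      sawCount G u n ≤
        sawCount G v (n + 1) +
          (∑ m ∈ Finset.Ico 1 n, sawCount G v m * sawCount G v (n - m)) +
          sawCount G v n := by
  intro n hn
  classical
  let _ : G.LocallyFinite := fun w => (hdeg w).fintype
  calc sawCount G u n
      ≤ Nat.card (G.SelfAvoidingWalk v (n + 1) ⊕
          Σ m : Finset.Ico 1 (n + 1), G.SelfAvoidingWalk v m × G.SelfAvoidingWalk v (n - m)) :=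
        Nat.card_le_card_of_injective _ (SelfAvoidingWalk.splitAt_injective hadj.symm n)
    _ = sawCount G v (n + 1) +
          ∑ m ∈ Finset.Ico 1 (n + 1), sawCount G v m * sawCount G v (n - m) := by
        rw [Nat.card_sum, Nat.card_sigma]
        simp only [Nat.card_prod]
        exact congrArg (_ + ·) (Finset.sum_coe_sort _ fun m => sawCount G v m * sawCount G v (n - m))
    _ = _ := by rw [Finset.sum_Ico_succ_top hn, Nat.sub_self, sawCount_zero, mul_one, add_assoc]
end

section
/- Let Δ ≥ 3 and let G be an infinite, connected, quasi-transitive simple graph in which every vertex has degree at most Δ and some vertex w has degree at most Δ−1. Then the connective constant satisfies μ(G) < Δ−1. -/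
/-!
Self-avoiding walks are non-backtracking, and we count the latter. Put `D = Δ - 1`: a
non-backtracking walk has at most `D` moves at each step, and at most `D - 1` at a vertex of
degree `≤ D`. By quasi-transitivity every vertex lies within a fixed distance `R` of such a small
vertex. Following the first `R` steps of a non-backtracking walk, walking on to a nearby small
vertex and cancelling backtracks gives a non-backtracking walk that reaches a small vertex within
`2R` steps; hence a block of `M = 2R + 1` steps has at most `D ^ M - 1` continuations instead of
`D ^ M`. So `σ_n = O((D ^ M - 1) ^ (n / M))` and `μ ≤ (D ^ M - 1) ^ (1 / M) < D`.
-/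

open Filter Topology

open Finset

lemma Finset.sum_add_le_card_mul {ι : Type*} {s : Finset ι} {f : ι → ℕ} {B c : ℕ} {i : ι}
    (hi : i ∈ s) (hf : ∀ j ∈ s, f j ≤ B) (hfi : f i + c ≤ B) : ∑ j ∈ s, f j + c ≤ #s * B := by
  classical
  have hrest : ∑ j ∈ s.erase i, f j ≤ #(s.erase i) * B :=
    sum_le_card_nsmul _ _ _ fun j hj => hf j (mem_of_mem_erase hj)
  rw [← sum_erase_add _ _ hi, ← card_erase_add_one hi, add_one_mul]
  omega

lemma le_of_tendsto_rpow_of_le_mul_pow {a : ℕ → ℝ} {C ρ μ : ℝ} (ha : ∀ n, 0 ≤ a n) (hC : 0 < C)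
    (hρ : 0 ≤ ρ) (hle : ∀ᶠ n in atTop, a n ≤ C * ρ ^ n)
    (hμ : Tendsto (fun n : ℕ => a n ^ (1 / (n : ℝ))) atTop (𝓝 μ)) : μ ≤ ρ := by
  have hlim : Tendsto (fun n : ℕ => C ^ (1 / (n : ℝ)) * ρ) atTop (𝓝 ρ) := by
    simpa using ((Real.continuousAt_const_rpow hC.ne').tendsto.comp
      tendsto_one_div_atTop_nhds_zero_nat).mul_const ρ
  refine le_of_tendsto_of_tendsto hμ hlim ?_
  filter_upwards [hle, eventually_ge_atTop 1] with n hn hn1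
  calc a n ^ (1 / (n : ℝ)) ≤ (C * ρ ^ n) ^ (1 / (n : ℝ)) :=
        Real.rpow_le_rpow (ha n) hn (by positivity)
    _ = C ^ (1 / (n : ℝ)) * ρ := by
        rw [Real.mul_rpow hC.le (by positivity), ← Real.rpow_natCast, ← Real.rpow_mul hρ,
          mul_one_div_cancel (by positivity : (n : ℝ) ≠ 0), Real.rpow_one]

lemma le_rpow_inv_of_tendsto_rpow_of_le_mul_pow_div {a : ℕ → ℝ} {C A μ : ℝ} {M : ℕ} (hM : M ≠ 0)
    (ha : ∀ n, 0 ≤ a n) (hC : 0 < C) (hA : 1 ≤ A) (hle : ∀ k, a (k + 1) ≤ C * A ^ (k / M))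
    (hμ : Tendsto (fun n : ℕ => a n ^ (1 / (n : ℝ))) atTop (𝓝 μ)) : μ ≤ A ^ (M⁻¹ : ℝ) := by
  have hρ : 1 ≤ A ^ (M⁻¹ : ℝ) := Real.one_le_rpow hA (by positivity)
  refine le_of_tendsto_rpow_of_le_mul_pow ha hC (by positivity) ?_ hμ
  filter_upwards [eventually_ge_atTop 1] with n hn
  obtain ⟨k, rfl⟩ := Nat.exists_eq_add_of_le' hn
  calc a (k + 1) ≤ C * A ^ (k / M) := hle k
    _ = C * (A ^ (M⁻¹ : ℝ)) ^ (M * (k / M)) := by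
        rw [pow_mul, Real.rpow_inv_natCast_pow (by positivity) hM]
    _ ≤ C * (A ^ (M⁻¹ : ℝ)) ^ (k + 1) := by
        gcongr
        exact (Nat.mul_div_le k M).trans k.le_succ

namespace SimpleGraph

variable {V : Type*}

/-- `nbPrev o v l` is the vertex from which the walk `v :: l` enters its last vertex, when it
entered `v` from `o` (`none` meaning that `v` is the start of the walk). -/
def nbPrev : Option V → V → List V → Option V
  | o, _, [] => o
  | _, v, x :: l => nbPrev (some v) x l

@[simp] lemma nbPrev_nil (o : Option V) (v : V) : nbPrev o v [] = o := rfl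

@[simp] lemma nbPrev_cons (o : Option V) (v x : V) (l : List V) :
    nbPrev o v (x :: l) = nbPrev (some v) x l := rfl

@[simp] lemma nbPrev_concat (o : Option V) (v x : V) (l : List V) :
    nbPrev o v (l ++ [x]) = some (l.getLastD v) := by
  induction l generalizing o v with
  | nil => rfl
  | cons y l ih => simpa only [List.cons_append, nbPrev_cons, List.getLastD_cons] using ih _ _

lemma Walk.sigma_ext_support {G : SimpleGraph V} {u a b : V} {p : G.Walk u a} {q : G.Walk u b}
    (h : p.support = q.support) : (⟨a, p⟩ : Σ w, G.Walk u w) = ⟨b, q⟩ := by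
  obtain rfl : a = b := by rw [← p.getLast_support, ← q.getLast_support]; simp only [h]
  rw [Walk.ext_support h]

lemma degree_eq_ncard_neighborSet (G : SimpleGraph V) [G.LocallyFinite] (v : V) :
    G.degree v = (G.neighborSet v).ncard := by
  rw [← card_neighborSet_eq_degree, ← Nat.card_eq_fintype_card, Nat.card_coe_set_eq]

def IsQuasiTransitive (G : SimpleGraph V) : Prop :=
  ∃ W : Finset V, ∀ v : V, ∃ φ : G ≃g G, φ v ∈ W

lemma Connected.exists_walk_length_le_of_isQuasiTransitive {G : SimpleGraph V}
    (hG : G.Connected) (hq : G.IsQuasiTransitive) (w : V) :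
    ∃ R, ∀ y, ∃ φ : G ≃g G, ∃ c : G.Walk y (φ w), c.length ≤ R := by
  obtain ⟨W, hW⟩ := hq
  refine ⟨W.sup (G.dist · w), fun y => ?_⟩
  obtain ⟨φ, hφ⟩ := hW y
  obtain ⟨c, hc⟩ := hG.exists_walk_length_eq_dist (φ y) w
  refine ⟨φ.symm, (c.map φ.symm.toHom).copy (by simp) rfl, ?_⟩
  rw [Walk.length_copy, Walk.length_map, hc]
  exact le_sup (f := (G.dist · w)) hφ

variable [DecidableEq V] (G : SimpleGraph V) [G.LocallyFinite]

def nbNext (o : Option V) (v : V) : Finset V := (G.neighborFinset v).filter (some · ≠ o)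

/-- `G.nbCont k o v` is the set of lists `l` of length `k` such that `v :: l` is the sequence of
vertices of a non-backtracking walk in `G` that entered `v` from `o`. -/
def nbCont : ℕ → Option V → V → Finset (List V)
  | 0, _, _ => {[]}
  | k + 1, o, v => (G.nbNext o v).biUnion fun x => (nbCont k (some v) x).image (x :: ·)

variable {G}

@[simp] lemma mem_nbNext {o : Option V} {v x : V} :
    x ∈ G.nbNext o v ↔ G.Adj v x ∧ some x ≠ o := by
  simp [nbNext]

@[simp] lemma nbNext_none (v : V) : G.nbNext none v = G.neighborFinset v := by
  ext x
  simp

lemma card_nbNext_some_add_one {v p : V} (hvp : G.Adj v p) :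
    #(G.nbNext (some p) v) + 1 = G.degree v := by
  have : G.nbNext (some p) v = (G.neighborFinset v).erase p := by
    ext x
    simp [and_comm]
  rw [this, card_erase_add_one (by simpa using hvp), card_neighborFinset_eq_degree]

@[simp] lemma mem_nbCont_zero {o : Option V} {v : V} {l : List V} :
    l ∈ G.nbCont 0 o v ↔ l = [] := by
  simp [nbCont]

lemma mem_nbCont_succ {k : ℕ} {o : Option V} {v : V} {l : List V} :
    l ∈ G.nbCont (k + 1) o v ↔
      ∃ x, G.Adj v x ∧ some x ≠ o ∧ ∃ l' ∈ G.nbCont k (some v) x, l = x :: l' := by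
  simp only [nbCont, Finset.mem_biUnion, mem_nbNext, Finset.mem_image, and_assoc]
  grind

@[simp] lemma cons_mem_nbCont_succ {k : ℕ} {o : Option V} {v x : V} {l : List V} :
    x :: l ∈ G.nbCont (k + 1) o v ↔ G.Adj v x ∧ some x ≠ o ∧ l ∈ G.nbCont k (some v) x := by
  simp [mem_nbCont_succ]

lemma card_nbCont_succ (k : ℕ) (o : Option V) (v : V) :
    #(G.nbCont (k + 1) o v) = ∑ x ∈ G.nbNext o v, #(G.nbCont k (some v) x) := by
  rw [nbCont, Finset.card_biUnion]
  · exact Finset.sum_congr rfl fun x _ => Finset.card_image_of_injective _ List.cons_injective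
  · intro x _ y _ hxy
    simp only [Function.onFun, Finset.disjoint_left, Finset.mem_image]
    rintro _ ⟨l, -, rfl⟩ ⟨l', -, h⟩
    exact hxy (List.cons_eq_cons.mp h).1.symm

lemma concat_mem_nbCont_succ_iff {k : ℕ} {o : Option V} {v x : V} {l : List V} :
    l ++ [x] ∈ G.nbCont (k + 1) o v ↔
      l ∈ G.nbCont k o v ∧ G.Adj (l.getLastD v) x ∧ some x ≠ nbPrev o v l := by
  induction l generalizing k o v with
  | nil =>
    cases k <;> simp [mem_nbCont_succ]
  | cons y l ih =>
    cases k with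
    | zero => simp [mem_nbCont_succ]
    | succ k => simp only [List.cons_append, cons_mem_nbCont_succ, ih, List.getLastD_cons,
        nbPrev_cons, and_assoc]

lemma take_mem_nbCont {k j : ℕ} {o : Option V} {v : V} {l : List V}
    (hl : l ∈ G.nbCont (k + j) o v) : l.take k ∈ G.nbCont k o v := by
  induction k generalizing o v l with
  | zero => simp
  | succ k ih =>
    rw [Nat.add_right_comm] at hl
    obtain ⟨x, hvx, hxo, l', hl', rfl⟩ := mem_nbCont_succ.mp hl
    simpa [hvx, hxo] using ih hl'

lemma drop_mem_nbCont {k j : ℕ} {o : Option V} {v : V} {l : List V}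
    (hl : l ∈ G.nbCont (k + j) o v) :
    l.drop k ∈ G.nbCont j (nbPrev o v (l.take k)) ((l.take k).getLastD v) := by
  induction k generalizing o v l with
  | zero => simpa using hl
  | succ k ih =>
    rw [Nat.add_right_comm] at hl
    obtain ⟨x, -, -, l', hl', rfl⟩ := mem_nbCont_succ.mp hl
    simpa only [List.take_succ_cons, List.drop_succ_cons, nbPrev_cons, List.getLastD_cons]
      using ih hl'

lemma exists_nbPrev_eq_some_adj {k : ℕ} {o : Option V} {v : V} {l : List V}
    (hl : l ∈ G.nbCont (k + 1) o v) : ∃ p, nbPrev o v l = some p ∧ G.Adj (l.getLastD v) p := by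
  obtain ⟨l', x, rfl⟩ : ∃ l' x, l = l' ++ [x] := by
    rcases List.eq_nil_or_concat l with rfl | ⟨l', x, rfl⟩
    · simp [mem_nbCont_succ] at hl
    · exact ⟨l', x, List.concat_eq_append ..⟩
  exact ⟨_, nbPrev_concat .., by simpa using (concat_mem_nbCont_succ_iff.mp hl).2.1.symm⟩

/-- Appending a walk `c` to a non-backtracking walk and cancelling backtracks yields a
non-backtracking walk to the end of `c`; the bound `c.length ≤ a` guarantees that the cancellation
never reaches the starting vertex. -/
lemma exists_mem_nbCont_getLastD_eq_of_walk {y u : V} (c : G.Walk y u) {a : ℕ} {o : Option V}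
    {v : V} {q : List V} (hc : c.length ≤ a) (hq : q ∈ G.nbCont a o v) (hqy : q.getLastD v = y) :
    ∃ d ≤ a + c.length, ∃ s ∈ G.nbCont d o v, s.getLastD v = u := by
  induction c generalizing a q with
  | nil => exact ⟨a, by omega, q, hq, hqy⟩
  | @cons y z u hyz c ih =>
    rw [Walk.length_cons] at hc ⊢
    obtain ⟨a, rfl⟩ : ∃ a', a = a' + 1 := ⟨a - 1, by omega⟩
    obtain ⟨q, b, rfl⟩ : ∃ q' b, q = q' ++ [b] := by
      rcases List.eq_nil_or_concat q with rfl | ⟨q', b, rfl⟩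
      · simp [mem_nbCont_succ] at hq
      · exact ⟨q', b, List.concat_eq_append ..⟩
    rw [List.getLastD_concat] at hqy
    subst hqy
    obtain ⟨hq', -, -⟩ := concat_mem_nbCont_succ_iff.mp hq
    by_cases hback : z = q.getLastD v
    · obtain ⟨d, hd, s, hs, hsu⟩ := ih (by omega) hq' hback.symm
      exact ⟨d, by omega, s, hs, hsu⟩
    · have hqz : (q ++ [b]) ++ [z] ∈ G.nbCont (a + 1 + 1) o v :=
        concat_mem_nbCont_succ_iff.mpr ⟨hq, by simpa using hyz, by simpa using hback⟩
      obtain ⟨d, hd, s, hs, hsu⟩ := ih (by omega) hqz List.getLastD_concat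
      exact ⟨d, by omega, s, hs, hsu⟩

lemma Walk.IsPath.support_tail_mem_nbCont {v u : V} {p : G.Walk v u} (hp : p.IsPath)
    {o : Option V} (ho : ∀ z ∈ o, z ∉ p.support) : p.support.tail ∈ G.nbCont p.length o v := by
  induction p generalizing o with
  | nil => simp
  | @cons v x u hvx p ih =>
    rw [Walk.cons_isPath_iff] at hp
    rw [Walk.support_cons, List.tail_cons, ← p.cons_tail_support, Walk.length_cons,
      cons_mem_nbCont_succ]
    refine ⟨hvx, fun hxo => ho x hxo.symm (by simp), ih hp.1 ?_⟩
    rintro _ ⟨⟩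
    exact hp.2

lemma sawCount_le_card_nbCont (v : V) (n : ℕ) : sawCount G v n ≤ #(G.nbCont n none v) := by
  rw [sawCount, ← Nat.card_eq_finsetCard]
  refine Nat.card_le_card_of_injective
    (fun P => ⟨P.1.2.support.tail, by
      simpa only [P.2.2] using P.2.1.support_tail_mem_nbCont (o := none) (by simp)⟩) ?_
  rintro ⟨⟨a, p⟩, _⟩ ⟨⟨b, q⟩, _⟩ hpq
  have htail : p.support.tail = q.support.tail := congrArg Subtype.val hpq
  exact Subtype.ext <| Walk.sigma_ext_support <| by
    rw [← p.cons_tail_support, ← q.cons_tail_support, htail]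

lemma card_nbCont_add_le_sum (a b : ℕ) (o : Option V) (v : V) :
    #(G.nbCont (a + b) o v) ≤
      ∑ s ∈ G.nbCont a o v, #(G.nbCont b (nbPrev o v s) (s.getLastD v)) := by
  rw [← card_sigma]
  refine card_le_card_of_injOn (fun l => ⟨l.take a, l.drop a⟩) (fun l hl => ?_) fun l _ l' _ h => ?_
  · exact mem_sigma.mpr ⟨take_mem_nbCont hl, drop_mem_nbCont hl⟩
  · simp only [Sigma.mk.inj_iff] at h
    rw [← List.take_append_drop a l, ← List.take_append_drop a l', h.1, eq_of_heq h.2]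

variable {D : ℕ} (hdeg : ∀ v, G.degree v ≤ D + 1)
include hdeg

lemma card_nbCont_le_pow (k : ℕ) {p v : V} (hvp : G.Adj v p) :
    #(G.nbCont k (some p) v) ≤ D ^ k := by
  induction k generalizing p v with
  | zero => simp [nbCont]
  | succ k ih =>
    have hcard := card_nbNext_some_add_one hvp
    rw [card_nbCont_succ, pow_succ']
    calc _ ≤ #(G.nbNext (some p) v) • D ^ k :=
          sum_le_card_nsmul _ _ _ fun x hx => ih (mem_nbNext.mp hx).1.symm
      _ ≤ D * D ^ k := by
          rw [smul_eq_mul]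
          gcongr
          have := hdeg v
          omega

/-- At the vertex of degree `≤ D` reached by `s` only `D - 1` of the `D` moves remain. -/
lemma card_nbCont_add_pow_le {d e : ℕ} {p v : V} {s : List V} (hvp : G.Adj v p)
    (hs : s ∈ G.nbCont d (some p) v) (hsmall : G.degree (s.getLastD v) ≤ D) :
    #(G.nbCont (d + 1 + e) (some p) v) + D ^ e ≤ D ^ (d + 1 + e) := by
  induction d generalizing p v s with
  | zero =>
    obtain rfl := mem_nbCont_zero.mp hs
    have hcard := card_nbNext_some_add_one hvp
    rw [List.getLastD_nil] at hsmall
    rw [zero_add, add_comm 1 e, card_nbCont_succ, pow_succ']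
    calc _ ≤ #(G.nbNext (some p) v) • D ^ e + D ^ e := by
          gcongr
          exact sum_le_card_nsmul _ _ _ fun x hx =>
            card_nbCont_le_pow hdeg e (mem_nbNext.mp hx).1.symm
      _ = (#(G.nbNext (some p) v) + 1) * D ^ e := by
          rw [smul_eq_mul, add_one_mul]
      _ ≤ D * D ^ e := by gcongr; omega
  | succ d ih =>
    obtain ⟨x, hvx, hxp, s', hs', rfl⟩ := mem_nbCont_succ.mp hs
    have hcard := card_nbNext_some_add_one hvp
    rw [List.getLastD_cons] at hsmall
    rw [Nat.add_right_comm, card_nbCont_succ, pow_succ']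
    calc _ ≤ #(G.nbNext (some p) v) * D ^ (d + 1 + e) := by
          refine sum_add_le_card_mul (mem_nbNext.mpr ⟨hvx, hxp⟩) (fun y hy => ?_)
            (ih hvx.symm hs' hsmall)
          exact card_nbCont_le_pow hdeg _ (mem_nbNext.mp hy).1.symm
      _ ≤ D * D ^ (d + 1 + e) := by
          gcongr
          have := hdeg v
          omega

variable {R : ℕ} (hD : 1 ≤ D)
  (hdense : ∀ y, ∃ u, G.degree u ≤ D ∧ ∃ c : G.Walk y u, c.length ≤ R)
include hD hdense

lemma card_nbCont_add_one_le_pow {p v : V} (hvp : G.Adj v p) :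
    #(G.nbCont (2 * R + 1) (some p) v) + 1 ≤ D ^ (2 * R + 1) := by
  rcases (G.nbCont (2 * R + 1) (some p) v).eq_empty_or_nonempty with hempty | ⟨l, hl⟩
  · simpa [hempty] using Nat.one_le_pow _ _ hD
  rw [show 2 * R + 1 = R + (R + 1) by omega] at hl
  obtain ⟨u, hu, c, hc⟩ := hdense ((l.take R).getLastD v)
  obtain ⟨d, hd, s, hs, rfl⟩ :=
    exists_mem_nbCont_getLastD_eq_of_walk c hc (take_mem_nbCont hl) rfl
  have hcut := card_nbCont_add_pow_le hdeg (e := 2 * R - d) hvp hs hu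
  rw [show d + 1 + (2 * R - d) = 2 * R + 1 by omega] at hcut
  have := Nat.one_le_pow (2 * R - d) D hD
  omega

lemma card_nbCont_le_pow_mul_pow (j r : ℕ) {p v : V} (hvp : G.Adj v p) :
    #(G.nbCont ((2 * R + 1) * j + r) (some p) v) ≤ (D ^ (2 * R + 1) - 1) ^ j * D ^ r := by
  induction j generalizing p v with
  | zero => simpa using card_nbCont_le_pow hdeg r hvp
  | succ j ih =>
    have hblock := card_nbCont_add_one_le_pow hdeg hD hdense hvp
    rw [show (2 * R + 1) * (j + 1) + r = 2 * R + 1 + ((2 * R + 1) * j + r) by ring, pow_succ',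
      mul_assoc]
    calc _ ≤ ∑ s ∈ G.nbCont (2 * R + 1) (some p) v,
            #(G.nbCont ((2 * R + 1) * j + r) (nbPrev (some p) v s) (s.getLastD v)) :=
          card_nbCont_add_le_sum _ _ _ _
      _ ≤ #(G.nbCont (2 * R + 1) (some p) v) • ((D ^ (2 * R + 1) - 1) ^ j * D ^ r) := by
          refine sum_le_card_nsmul _ _ _ fun s hs => ?_
          obtain ⟨w, hw, hadj⟩ := exists_nbPrev_eq_some_adj hs
          rw [hw]
          exact ih hadj
      _ ≤ (D ^ (2 * R + 1) - 1) * ((D ^ (2 * R + 1) - 1) ^ j * D ^ r) := by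
          rw [smul_eq_mul]
          gcongr
          omega

lemma sawSup_succ_le (k : ℕ) :
    sawSup G (k + 1) ≤ (D + 1) * D ^ (2 * R + 1) * (D ^ (2 * R + 1) - 1) ^ (k / (2 * R + 1)) := by
  refine csSup_le' <| Set.forall_mem_range.mpr fun v => (sawCount_le_card_nbCont v _).trans ?_
  rw [card_nbCont_succ, nbNext_none]
  calc _ ≤ #(G.neighborFinset v) •
          ((D ^ (2 * R + 1) - 1) ^ (k / (2 * R + 1)) * D ^ (k % (2 * R + 1))) := by
        refine sum_le_card_nsmul _ _ _ fun x hx => ?_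
        simpa only [Nat.div_add_mod] using card_nbCont_le_pow_mul_pow hdeg hD hdense
          (k / (2 * R + 1)) (k % (2 * R + 1)) ((mem_neighborFinset _ _ _).mp hx).symm
    _ ≤ (D + 1) * (D ^ (2 * R + 1) - 1) ^ (k / (2 * R + 1)) * D ^ (2 * R + 1) := by
        rw [smul_eq_mul, card_neighborFinset_eq_degree, ← mul_assoc]
        gcongr
        · exact hdeg v
        exact (Nat.mod_lt _ (by omega)).le
    _ = _ := by ring

end SimpleGraph

open SimpleGraph in
theorem mu_lt_of_small_degree_vertex_general
    {V : Type*} (G : SimpleGraph V) (Δ : ℕ) (hΔ : 3 ≤ Δ)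
    (hconn : G.Connected)
    (hquasi : ∃ W : Finset V, ∀ v : V, ∃ φ : G ≃g G, φ v ∈ W)
    (hdeg : ∀ v : V, (G.neighborSet v).Finite ∧ (G.neighborSet v).ncard ≤ Δ)
    (hw : ∃ w : V, (G.neighborSet w).ncard ≤ Δ - 1) :
    ∀ μ : ℝ,
      Filter.Tendsto (fun n : ℕ => (sawSup G n : ℝ) ^ (1 / (n : ℝ)))
        Filter.atTop (nhds μ) →
      μ < (Δ : ℝ) - 1 := by
  classical
  intro μ hμ
  let : G.LocallyFinite := fun v => (hdeg v).1.fintype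
  obtain ⟨w, hw⟩ := hw
  obtain ⟨R, hR⟩ := hconn.exists_walk_length_le_of_isQuasiTransitive hquasi w
  set D := Δ - 1
  set M := 2 * R + 1
  have hD : 2 ≤ D := by omega
  have hdegD (v : V) : G.degree v ≤ D + 1 := by
    have := (hdeg v).2
    rw [degree_eq_ncard_neighborSet]
    omega
  have hdense (y : V) : ∃ u, G.degree u ≤ D ∧ ∃ c : G.Walk y u, c.length ≤ R := by
    obtain ⟨φ, c, hc⟩ := hR y
    exact ⟨φ w, by rwa [Iso.degree_eq, degree_eq_ncard_neighborSet], c, hc⟩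
  have hA : (1 : ℝ) ≤ (D ^ M - 1 : ℕ) := by
    have : D ≤ D ^ M := Nat.le_self_pow (by omega) D
    exact_mod_cast (by omega : 1 ≤ D ^ M - 1)
  calc μ ≤ ((D ^ M - 1 : ℕ) : ℝ) ^ (M⁻¹ : ℝ) :=
        le_rpow_inv_of_tendsto_rpow_of_le_mul_pow_div (by omega) (fun _ => by positivity)
          (C := ((D + 1) * D ^ M : ℕ)) (by have := pow_pos (by omega : 0 < D) M; positivity) hA
          (fun k => by exact_mod_cast sawSup_succ_le hdegD (by omega) hdense k) hμ
    _ < D := by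
        rw [Real.rpow_inv_lt_iff_of_pos (by positivity) (by positivity) (by positivity),
          Real.rpow_natCast]
        exact_mod_cast Nat.sub_lt (pow_pos (by omega) M) one_pos
    _ = (Δ : ℝ) - 1 := by rw [Nat.cast_sub (by omega), Nat.cast_one]

theorem mu_lt_of_small_degree_vertex
    {V : Type*} (G : SimpleGraph V) (Δ : ℕ) (hΔ : 3 ≤ Δ)
    (hinf : Infinite V) (hconn : G.Connected)
    (hquasi : ∃ W : Finset V, ∀ v : V, ∃ φ : G ≃g G, φ v ∈ W)
    (hdeg : ∀ v : V, (G.neighborSet v).Finite ∧ (G.neighborSet v).ncard ≤ Δ)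
    (hw : ∃ w : V, (G.neighborSet w).ncard ≤ Δ - 1) :
    ∀ μ : ℝ,
      Filter.Tendsto (fun n : ℕ => (sawSup G n : ℝ) ^ (1 / (n : ℝ)))
        Filter.atTop (nhds μ) →
      μ < (Δ : ℝ) - 1 :=
  mu_lt_of_small_degree_vertex_general G Δ hΔ hconn hquasi hdeg hw
end

section
/- Let G be an infinite, connected, locally finite simple graph, let v be a vertex, and let k ≥ 1. If for every n ≥ 1 there exist k pairwise edge-disjoint self-avoiding walks of length n starting at v, then there exist k pairwise edge-disjoint infinite self-avoiding walks starting at v. -/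
/-!
Encode a `k`-tuple of walks of length `n` from `v` as a tuple of vertex sequences stopped at
time `n`. Truncation makes the tuples of edge-disjoint self-avoiding walks an inverse system,
and local finiteness leaves only finitely many one-step extensions of each tuple, so Kőnig's
lemma yields a compatible sequence of tuples. Its limit is a tuple of infinite walks; being
self-avoiding and edge-disjoint are conditions on finite prefixes, so they pass to the limit.
-/

open SimpleGraph

section

variable {ι V : Type*}

def truncateAt (n : ℕ) (F : ι → ℕ → V) : ι → ℕ → V := fun i m => F i (min m n)

lemma truncateAt_truncateAt (m n : ℕ) (F : ι → ℕ → V) :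
    truncateAt m (truncateAt n F) = truncateAt (min m n) F := by
  funext i t
  simp only [truncateAt, min_assoc]

lemma truncateAt_idem (n : ℕ) (F : ι → ℕ → V) :
    truncateAt n (truncateAt n F) = truncateAt n F := by
  rw [truncateAt_truncateAt, min_self]

lemma truncateAt_apply_of_le {m n : ℕ} (h : m ≤ n) (F : ι → ℕ → V) (i : ι) :
    truncateAt n F i m = F i m := by
  simp only [truncateAt, min_eq_left h]

lemma SimpleGraph.finite_setOf_truncateAt_eq [Finite ι] {G : SimpleGraph V}
    (hlf : ∀ x, (G.neighborSet x).Finite) (n : ℕ) (a : ι → ℕ → V) :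
    {F : ι → ℕ → V | truncateAt (n + 1) F = F ∧ (∀ i, G.Adj (F i n) (F i (n + 1))) ∧
      truncateAt n F = a}.Finite := by
  refine Set.Finite.of_finite_image (f := fun F i => F i (n + 1))
    ((Set.Finite.pi fun i => hlf (a i n)).subset ?_) ?_
  · rintro _ ⟨F, ⟨-, hadj, rfl⟩, rfl⟩ i -
    simpa [truncateAt] using hadj i
  · rintro F ⟨hF, -, ha⟩ F' ⟨hF', -, ha'⟩ hlast
    rw [← hF, ← hF']
    funext i m
    rcases le_or_gt m n with hm | hm
    · simpa [truncateAt, hm, min_eq_left (hm.trans n.le_succ)] using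
        congrFun₂ (ha.trans ha'.symm) i m
    · simpa [truncateAt, min_eq_right (Nat.succ_le_of_lt hm)] using congrFun hlast i

theorem SimpleGraph.exists_forall_truncateAt_of_forall_exists [Finite ι] {G : SimpleGraph V}
    (hlf : ∀ x, (G.neighborSet x).Finite) (v : V) (P : ℕ → (ι → ℕ → V) → Prop)
    (hstart : ∀ F, P 0 F → ∀ i, F i 0 = v)
    (hstep : ∀ n F, P (n + 1) F → ∀ i, G.Adj (F i n) (F i (n + 1)))
    (hprefix : ∀ m n F, m ≤ n → P n F → P m (truncateAt m F))
    (hne : ∀ n, ∃ F, P n F) :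
    ∃ F, ∀ n, P n (truncateAt n F) := by
  let α : ℕ → Type _ := fun n => {F // P n F ∧ truncateAt n F = F}
  let π {m n : ℕ} (h : m ≤ n) (F : α n) : α m :=
    ⟨truncateAt m F.1, hprefix m n F.1 h F.2.1, truncateAt_idem m F.1⟩
  have : Subsingleton (α 0) := ⟨fun F F' => Subtype.ext <| by
    rw [← F.2.2, ← F'.2.2]
    funext i m
    simp only [truncateAt, Nat.min_zero, hstart _ F.2.1, hstart _ F'.2.1]⟩
  have : ∀ n, Nonempty (α n) := fun n =>
    let ⟨F, hF⟩ := hne n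
    ⟨⟨truncateAt n F, hprefix n n F le_rfl hF, truncateAt_idem n F⟩⟩
  obtain ⟨f, hf⟩ := exists_seq_forall_proj_of_forall_finite π (fun n F => Subtype.ext F.2.2)
    (fun l m n hlm hmn F => Subtype.ext <| by
      simp only [π, truncateAt_truncateAt, min_eq_left hlm])
    (fun n a => ((G.finite_setOf_truncateAt_eq hlf n a.1).preimage
      Subtype.val_injective.injOn).subset fun F hF =>
        ⟨F.2.2, hstep n F.1 F.2.1, congrArg Subtype.val hF⟩)
  refine ⟨fun i m => (f m).1 i m, fun n => ?_⟩
  convert (f n).2.1 using 1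
  funext i m
  show (f (min m n)).1 i (min m n) = (f n).1 i m
  rw [← (f n).2.2, ← hf (min_le_right m n)]
  simp only [π, truncateAt, min_self]

namespace SimpleGraph

variable (G : SimpleGraph V)

def EdgeDisjointPathPrefixes (v : V) (n : ℕ) (F : ι → ℕ → V) : Prop :=
  (∀ i, F i 0 = v ∧ (∀ m < n, G.Adj (F i m) (F i (m + 1))) ∧ Set.InjOn (F i) (Set.Iic n)) ∧
    ∀ i j, i ≠ j → ∀ m < n, ∀ m' < n, s(F i m, F i (m + 1)) ≠ s(F j m', F j (m' + 1))

variable {G}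

lemma EdgeDisjointPathPrefixes.mono {v : V} {m n : ℕ} {F : ι → ℕ → V}
    (hF : G.EdgeDisjointPathPrefixes v n F) (h : m ≤ n) : G.EdgeDisjointPathPrefixes v m F :=
  ⟨fun i => ⟨(hF.1 i).1, fun t ht => (hF.1 i).2.1 t (ht.trans_le h),
      (hF.1 i).2.2.mono (Set.Iic_subset_Iic.2 h)⟩,
    fun i j hij t ht t' ht' => hF.2 i j hij t (ht.trans_le h) t' (ht'.trans_le h)⟩

lemma EdgeDisjointPathPrefixes.of_eqOn {v : V} {n : ℕ} {F F' : ι → ℕ → V}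
    (hF : G.EdgeDisjointPathPrefixes v n F) (h : ∀ i, ∀ m ≤ n, F i m = F' i m) :
    G.EdgeDisjointPathPrefixes v n F' := by
  obtain ⟨hpath, hdisj⟩ := hF
  refine ⟨fun i => ⟨?_, fun m hm => ?_, (hpath i).2.2.congr fun m hm => h i m hm⟩,
    fun i j hij m hm m' hm' => ?_⟩
  · rw [← h i 0 (Nat.zero_le n)]
    exact (hpath i).1
  · rw [← h i m hm.le, ← h i (m + 1) hm]
    exact (hpath i).2.1 m hm
  · rw [← h i m hm.le, ← h i (m + 1) hm, ← h j m' hm'.le, ← h j (m' + 1) hm']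
    exact hdisj i j hij m hm m' hm'

lemma edgeDisjointPathPrefixes_getVert {v : V} {n : ℕ} (p : ι → Σ u, G.Walk v u)
    (hpath : ∀ i, (p i).2.IsPath ∧ (p i).2.length = n)
    (hdisj : ∀ i j, i ≠ j → ∀ e, e ∈ (p i).2.edges → e ∉ (p j).2.edges) :
    G.EdgeDisjointPathPrefixes v n fun i m => (p i).2.getVert m := by
  refine ⟨fun i => ⟨Walk.getVert_zero _, fun m hm => ?_, ?_⟩, fun i j hij m hm m' hm' heq => ?_⟩
  · exact (p i).2.adj_getVert_succ ((hpath i).2 ▸ hm)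
  · have := (hpath i).1.getVert_injOn
    rwa [(hpath i).2] at this
  · refine hdisj i j hij _ ((Walk.mk_mem_edges_iff_exists _).2 ⟨m, (hpath i).2 ▸ hm, rfl⟩) ?_
    rw [heq]
    exact (Walk.mk_mem_edges_iff_exists _).2 ⟨m', (hpath j).2 ▸ hm', rfl⟩

end SimpleGraph

end

theorem edge_disjoint_infinite_saws_of_finite_general
    {V : Type*} (G : SimpleGraph V)
    (hlf : ∀ v : V, (G.neighborSet v).Finite)
    (v : V) (k : ℕ)
    (hfin : ∀ n : ℕ, 1 ≤ n →
      ∃ p : Fin k → (Σ u : V, G.Walk v u),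
        (∀ i : Fin k, (p i).2.IsPath ∧ (p i).2.length = n) ∧
        (∀ i j : Fin k, i ≠ j →
          ∀ e : Sym2 V, e ∈ (p i).2.edges → e ∉ (p j).2.edges)) :
    ∃ w : Fin k → ℕ → V,
      (∀ i : Fin k, w i 0 = v ∧ Function.Injective (w i) ∧
        ∀ m : ℕ, G.Adj (w i m) (w i (m + 1))) ∧
      (∀ i j : Fin k, i ≠ j → ∀ m m' : ℕ,
        s(w i m, w i (m + 1)) ≠ s(w j m', w j (m' + 1))) := by
  have hne (n : ℕ) : ∃ F : Fin k → ℕ → V, G.EdgeDisjointPathPrefixes v n F := by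
    obtain ⟨p, hpath, hdisj⟩ := hfin (n + 1) n.succ_pos
    exact ⟨_, (edgeDisjointPathPrefixes_getVert p hpath hdisj).mono n.le_succ⟩
  obtain ⟨w, hw⟩ := exists_forall_truncateAt_of_forall_exists hlf v (G.EdgeDisjointPathPrefixes v)
    (fun F hF i => (hF.1 i).1) (fun n F hF i => (hF.1 i).2.1 n n.lt_succ_self)
    (fun m n F hmn hF => (hF.mono hmn).of_eqOn fun i t ht => (truncateAt_apply_of_le ht F i).symm)
    hne
  have hlim (n : ℕ) : G.EdgeDisjointPathPrefixes v n w :=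
    (hw n).of_eqOn fun i m hm => truncateAt_apply_of_le hm w i
  refine ⟨w, fun i => ⟨((hlim 0).1 i).1, fun a b hab => ?_, fun m => ?_⟩,
    fun i j hij m m' => (hlim (max m m' + 1)).2 i j hij m (by omega) m' (by omega)⟩
  · exact ((hlim (max a b)).1 i).2.2 (le_max_left a b) (le_max_right a b) hab
  · exact ((hlim (m + 1)).1 i).2.1 m m.lt_succ_self

theorem edge_disjoint_infinite_saws_of_finite
    {V : Type*} (G : SimpleGraph V)
    (hinf : Infinite V) (hconn : G.Connected)
    (hlf : ∀ v : V, (G.neighborSet v).Finite)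
    (v : V) (k : ℕ) (hk : 1 ≤ k)
    (hfin : ∀ n : ℕ, 1 ≤ n →
      ∃ p : Fin k → (Σ u : V, G.Walk v u),
        (∀ i : Fin k, (p i).2.IsPath ∧ (p i).2.length = n) ∧
        (∀ i j : Fin k, i ≠ j →
          ∀ e : Sym2 V, e ∈ (p i).2.edges → e ∉ (p j).2.edges)) :
    ∃ w : Fin k → ℕ → V,
      (∀ i : Fin k, w i 0 = v ∧ Function.Injective (w i) ∧
        ∀ m : ℕ, G.Adj (w i m) (w i (m + 1))) ∧
      (∀ i j : Fin k, i ≠ j → ∀ m m' : ℕ,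
        s(w i m, w i (m + 1)) ≠ s(w j m', w j (m' + 1))) :=
  edge_disjoint_infinite_saws_of_finite_general G hlf v k hfin
end

section
/- Let Δ ≥ 3 and let G be an infinite, connected simple graph in which every vertex has degree at most Δ. Suppose there exists N ≥ 1 such that for every vertex u and every edge e incident to u, the number of N-step self-avoiding walks from u that do not traverse e is at most (Δ−1)^N − 1. Then for every vertex v and every k ≥ 1, σ_{kN}(v) ≤ Δ·((Δ−1)^N − 1)^k, and consequently limsup_{n→∞} σ_n(v)^{1/n} ≤ ((Δ−1)^N − 1)^{1/N} < Δ−1 for every vertex v. -/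
/-!
A self-avoiding walk of length `m + N` (with `m ≥ 1`) is a self-avoiding walk `q` of length `m`
followed by an `N`-step self-avoiding walk from the endpoint of `q`; since the concatenation is
a trail, the continuation cannot traverse the last edge of `q`. Hence the hypothesis gives
`σ_{m+N}(v) ≤ σ_m(v) ((Δ-1)^N - 1)`, and iterating from the non-backtracking bound
`σ_N(v) ≤ Δ (Δ-1)^(N-1) ≤ Δ ((Δ-1)^N - 1)` proves the first claim. A remainder of fewer than `N`
steps costs at most a factor `Δ^N`, which disappears under the `n`-th root.
-/

open Filter Topology

/-- The number of `n`-step self-avoiding walks in `G` starting at `u` that do not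
traverse the edge `e`. -/
noncomputable def sawCountAvoid {V : Type*} (G : SimpleGraph V) (u : V) (e : Sym2 V)
    (n : ℕ) : ℕ :=
  Nat.card {p : Σ u' : V, G.Walk u u' //
    p.2.IsPath ∧ p.2.length = n ∧ e ∉ p.2.edges}

noncomputable def sawCountAvoidVertex {V : Type*} (G : SimpleGraph V) (u w : V) (n : ℕ) : ℕ :=
  Nat.card {p : Σ v : V, G.Walk u v // p.2.IsPath ∧ p.2.length = n ∧ w ∉ p.2.support}

open SimpleGraph

theorem Nat.card_le_card_of_subset_range {α β : Type*} [Finite α] (f : α → β) {s : Set β}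
    (hs : s ⊆ Set.range f) : Nat.card s ≤ Nat.card α :=
  (Nat.card_mono (Set.finite_range f) hs).trans (Finite.card_range_le f)

theorem Nat.card_sigma_le_mul {α : Type*} {β : α → Type*} [Finite α] [∀ a, Finite (β a)]
    {M : ℕ} (h : ∀ a, Nat.card (β a) ≤ M) : Nat.card (Σ a, β a) ≤ Nat.card α * M := by
  have := Fintype.ofFinite α
  rw [Nat.card_sigma, Nat.card_eq_fintype_card, ← smul_eq_mul, ← Finset.card_univ]
  exact Finset.sum_le_card_nsmul _ _ _ fun a _ => h a

theorem Nat.pow_pred_le_pow_sub_one {a N : ℕ} (ha : 2 ≤ a) (hN : N ≠ 0) :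
    a ^ (N - 1) ≤ a ^ N - 1 := by
  obtain ⟨N, rfl⟩ := Nat.exists_eq_succ_of_ne_zero hN
  have := Nat.mul_le_mul_left (a ^ N) ha
  have := Nat.one_le_pow N a (by omega)
  rw [Nat.succ_sub_one, pow_succ]
  omega

namespace SimpleGraph

variable {V : Type*} {G : SimpleGraph V}

theorem finite_walk_length_eq [G.LocallyFinite] (u : V) (n : ℕ) :
    Finite {p : Σ v, G.Walk u v // p.2.length = n} := by
  induction n generalizing u with
  | zero =>
    refine Finite.of_surjective (fun _ : Unit => ⟨⟨u, .nil⟩, rfl⟩) ?_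
    rintro ⟨⟨v, p⟩, hp⟩
    cases p with
    | nil => exact ⟨(), rfl⟩
    | cons => simp at hp
  | succ n ih =>
    refine Finite.of_surjective (fun a : Σ x : G.neighborSet u,
        {q : Σ v, G.Walk x v // q.2.length = n} =>
      (⟨⟨a.2.1.1, .cons ((G.mem_neighborSet _ _).1 a.1.2) a.2.1.2⟩, by simpa using a.2.2⟩ :
        {p : Σ v, G.Walk u v // p.2.length = n + 1})) ?_
    rintro ⟨⟨v, p⟩, hp⟩
    cases p with
    | nil => simp at hp
    | cons h q => exact ⟨⟨⟨_, h⟩, ⟨⟨v, q⟩, by simpa using hp⟩⟩, rfl⟩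

theorem finite_of_forall_length_eq [G.LocallyFinite] {u : V} {n : ℕ}
    {P : (Σ v, G.Walk u v) → Prop} (hP : ∀ p, P p → p.2.length = n) :
    Finite {p // P p} :=
  have := finite_walk_length_eq (G := G) u n
  Finite.of_injective (fun a => (⟨a.1, hP _ a.2⟩ : {p : Σ v, G.Walk u v // p.2.length = n}))
    fun _ _ h => Subtype.ext congr($h.1)

theorem card_le_one_of_forall_length_eq_zero {u : V} {P : (Σ v, G.Walk u v) → Prop}
    (hP : ∀ p, P p → p.2.length = 0) : Nat.card {p // P p} ≤ 1 := by
  refine (Nat.card_le_card_of_subset_range (fun _ : Unit => (⟨u, .nil⟩ : Σ v, G.Walk u v))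
    fun ⟨v, p⟩ hp => ?_).trans Nat.card_unique.le
  cases p with
  | nil => exact ⟨(), rfl⟩
  | cons => simpa using hP _ hp

theorem card_walk_le_of_snd_mem [G.LocallyFinite] {u : V} {n M : ℕ} {T : Set V}
    {P : (Σ v, G.Walk u v) → Prop}
    (hP : ∀ p, P p → p.2.IsPath ∧ p.2.length = n + 1 ∧ p.2.snd ∈ T)
    (hM : ∀ x, G.Adj u x → sawCountAvoidVertex G x u n ≤ M) :
    Nat.card {p // P p} ≤ Nat.card ↥(G.neighborSet u ∩ T) * M := by
  have (x : V) : Finite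
      {r : Σ v, G.Walk x v // r.2.IsPath ∧ r.2.length = n ∧ u ∉ r.2.support} :=
    finite_of_forall_length_eq fun _ hr => hr.2.1
  calc Nat.card {p // P p}
      ≤ Nat.card (Σ x : ↥(G.neighborSet u ∩ T),
          {r : Σ v, G.Walk x v // r.2.IsPath ∧ r.2.length = n ∧ u ∉ r.2.support}) := by
        refine Nat.card_le_card_of_subset_range
          (fun a => ⟨a.2.1.1, .cons ((G.mem_neighborSet _ _).1 a.1.2.1) a.2.1.2⟩)
          fun ⟨v, p⟩ hp => ?_
        obtain ⟨hpath, hlen, hT⟩ := hP _ hp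
        cases p with
        | nil => simp at hlen
        | cons h q =>
          rw [Walk.cons_isPath_iff] at hpath
          exact ⟨⟨⟨_, h, by simpa using hT⟩, ⟨⟨v, q⟩, hpath.1, by simpa using hlen, hpath.2⟩⟩, rfl⟩
    _ ≤ Nat.card ↥(G.neighborSet u ∩ T) * M := Nat.card_sigma_le_mul fun x => hM x x.2.1

end SimpleGraph

section

variable {V : Type*} {G : SimpleGraph V}

theorem sawCountAvoidVertex_le [G.LocallyFinite] {Δ : ℕ} (hΔ : ∀ v, G.degree v ≤ Δ)
    (n : ℕ) {u w : V} (huw : G.Adj u w) : sawCountAvoidVertex G u w n ≤ (Δ - 1) ^ n := by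
  induction n generalizing u w with
  | zero => exact card_le_one_of_forall_length_eq_zero fun _ hp => hp.2.1
  | succ n ih =>
    calc sawCountAvoidVertex G u w (n + 1)
        ≤ Nat.card ↥(G.neighborSet u ∩ {w}ᶜ) * (Δ - 1) ^ n :=
          card_walk_le_of_snd_mem
            (fun p hp => ⟨hp.1, hp.2.1, fun h => hp.2.2 (h ▸ p.2.getVert_mem_support 1)⟩)
            fun x hx => ih hx.symm
      _ ≤ (Δ - 1) * (Δ - 1) ^ n := by
          gcongr
          rw [← Set.sdiff_eq, Nat.card_coe_set_eq,
            Set.ncard_sdiff_singleton_of_mem ((G.mem_neighborSet _ _).2 huw),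
            ← Nat.card_coe_set_eq, Nat.card_eq_fintype_card, card_neighborSet_eq_degree]
          exact Nat.sub_le_sub_right (hΔ u) 1
      _ = (Δ - 1) ^ (n + 1) := (pow_succ' _ _).symm

theorem sawCount_succ_le [G.LocallyFinite] {Δ : ℕ} (hΔ : ∀ v, G.degree v ≤ Δ)
    (u : V) (n : ℕ) : sawCount G u (n + 1) ≤ Δ * (Δ - 1) ^ n :=
  calc sawCount G u (n + 1) ≤ Nat.card ↥(G.neighborSet u ∩ Set.univ) * (Δ - 1) ^ n :=
        card_walk_le_of_snd_mem (fun p hp => ⟨hp.1, hp.2, trivial⟩)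
          fun x hx => sawCountAvoidVertex_le hΔ n hx.symm
    _ ≤ Δ * (Δ - 1) ^ n := by
        gcongr
        rw [Set.inter_univ, Nat.card_eq_fintype_card, card_neighborSet_eq_degree]
        exact hΔ u

theorem sawCount_le_pow [G.LocallyFinite] {Δ : ℕ} (hΔ : ∀ v, G.degree v ≤ Δ) (u : V) :
    ∀ n, sawCount G u n ≤ Δ ^ n
  | 0 => card_le_one_of_forall_length_eq_zero fun _ hp => hp.2
  | n + 1 => (sawCount_succ_le hΔ u n).trans <| by
      rw [pow_succ']
      gcongr
      exact Nat.sub_le Δ 1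

theorem sawCountAvoid_le_sawCount [G.LocallyFinite] (u : V) (e : Sym2 V) (n : ℕ) :
    sawCountAvoid G u e n ≤ sawCount G u n :=
  Nat.card_mono (finite_of_forall_length_eq fun _ hp => hp.2) fun _ hp => ⟨hp.1, hp.2.1⟩

theorem sawCount_add_le [G.LocallyFinite] (v : V) {m j C : ℕ} (hm : m ≠ 0)
    (hC : ∀ y, ∀ e ∈ G.incidenceSet y, sawCountAvoid G y e j ≤ C) :
    sawCount G v (m + j) ≤ sawCount G v m * C := by
  let Prefix := {q : Σ y, G.Walk v y // q.2.IsPath ∧ q.2.length = m}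
  have (q : Prefix) : Finite {r : Σ z, G.Walk q.1.1 z //
      r.2.IsPath ∧ r.2.length = j ∧ s(q.1.2.penultimate, q.1.1) ∉ r.2.edges} :=
    finite_of_forall_length_eq fun _ hr => hr.2.1
  have : Finite Prefix := finite_of_forall_length_eq fun _ hq => hq.2
  calc sawCount G v (m + j)
      ≤ Nat.card (Σ q : Prefix, {r : Σ z, G.Walk q.1.1 z //
          r.2.IsPath ∧ r.2.length = j ∧ s(q.1.2.penultimate, q.1.1) ∉ r.2.edges}) := by
        refine Nat.card_le_card_of_subset_range
          (fun a => ⟨a.2.1.1, a.1.1.2.append a.2.1.2⟩) fun ⟨v', p⟩ ⟨hp, hlen⟩ => ?_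
        replace hlen : p.length = m + j := hlen
        have hnil : ¬(p.take m).Nil := by
          simp [← Walk.length_eq_zero_iff, hlen, hm]
        have hlast : s((p.take m).penultimate, p.getVert m) ∉ (p.drop m).edges := by
          have hnd := hp.isTrail.edges_nodup
          rw [← p.append_take_drop_eq m, Walk.edges_append] at hnd
          exact List.disjoint_of_nodup_append hnd (Walk.mk_penultimate_end_mem_edges hnil)
        refine ⟨⟨⟨⟨_, p.take m⟩, hp.take m, by simp [hlen]⟩,
          ⟨⟨_, p.drop m⟩, hp.drop m, by simp [hlen], hlast⟩⟩, ?_⟩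
        simp only [Walk.append_take_drop_eq]
    _ ≤ sawCount G v m * C := Nat.card_sigma_le_mul fun q =>
        hC _ _ ⟨Walk.adj_penultimate (by simp [← Walk.length_eq_zero_iff, q.2.2, hm]),
          Sym2.mem_mk_right _ _⟩

theorem sawCount_mul_le [G.LocallyFinite] {Δ N M : ℕ} (hΔ : ∀ v, G.degree v ≤ Δ) (hN : N ≠ 0)
    (hM : (Δ - 1) ^ (N - 1) ≤ M) (hav : ∀ u, ∀ e ∈ G.incidenceSet u, sawCountAvoid G u e N ≤ M)
    (v : V) {k : ℕ} (hk : 1 ≤ k) : sawCount G v (k * N) ≤ Δ * M ^ k := by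
  induction k, hk using Nat.le_induction with
  | base =>
    obtain ⟨N, rfl⟩ := Nat.exists_eq_succ_of_ne_zero hN
    rw [one_mul, pow_one]
    exact (sawCount_succ_le hΔ v N).trans (Nat.mul_le_mul_left Δ hM)
  | succ k hk ih =>
    calc sawCount G v ((k + 1) * N) = sawCount G v (k * N + N) := by rw [add_one_mul]
      _ ≤ sawCount G v (k * N) * M := sawCount_add_le v (by positivity) hav
      _ ≤ Δ * M ^ k * M := Nat.mul_le_mul_right M ih
      _ = Δ * M ^ (k + 1) := by ring

theorem sawCount_le_pow_mul_pow_div [G.LocallyFinite] {Δ N M : ℕ} (hΔ : ∀ v, G.degree v ≤ Δ)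
    (hN : N ≠ 0) (hM : (Δ - 1) ^ (N - 1) ≤ M)
    (hav : ∀ u, ∀ e ∈ G.incidenceSet u, sawCountAvoid G u e N ≤ M) (v : V) {n : ℕ}
    (hn : N ≤ n) : sawCount G v n ≤ Δ ^ N * M ^ (n / N) := by
  have hk : 1 ≤ n / N := (Nat.one_le_div_iff (Nat.pos_of_ne_zero hN)).2 hn
  calc sawCount G v n = sawCount G v (n / N * N + n % N) := by rw [Nat.div_add_mod']
    _ ≤ sawCount G v (n / N * N) * Δ ^ (n % N) := sawCount_add_le v (by positivity)
        fun y e _ => (sawCountAvoid_le_sawCount y e _).trans (sawCount_le_pow hΔ y _)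
    _ ≤ Δ * M ^ (n / N) * Δ ^ (n % N) :=
        Nat.mul_le_mul_right _ (sawCount_mul_le hΔ hN hM hav v hk)
    _ = Δ ^ (n % N + 1) * M ^ (n / N) := by ring
    _ ≤ Δ ^ N * M ^ (n / N) := by
        rcases Nat.eq_zero_or_pos Δ with rfl | hΔ0
        · simp
        · exact Nat.mul_le_mul_right _
            (Nat.pow_le_pow_right hΔ0 (Nat.mod_lt n (Nat.pos_of_ne_zero hN)))

end

theorem pow_le_rpow_one_div_pow {x : ℝ} (hx : 1 ≤ x) {N k n : ℕ} (hN : N ≠ 0) (h : k * N ≤ n) :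
    x ^ k ≤ (x ^ (1 / (N : ℝ))) ^ n :=
  calc x ^ k = (x ^ (1 / (N : ℝ))) ^ (k * N) := by
        rw [pow_mul', one_div, Real.rpow_inv_natCast_pow (by linarith) hN]
    _ ≤ (x ^ (1 / (N : ℝ))) ^ n := pow_le_pow_right₀ (Real.one_le_rpow hx (by positivity)) h

theorem pow_sub_one_rpow_one_div_lt {a : ℝ} {N : ℕ} (ha : 0 ≤ a) (h : 1 ≤ a ^ N) (hN : N ≠ 0) :
    (a ^ N - 1) ^ (1 / (N : ℝ)) < a := by
  rw [one_div, Real.rpow_inv_lt_iff_of_pos (by linarith) ha (by positivity), Real.rpow_natCast]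
  linarith

theorem limsup_rpow_one_div_le {u : ℕ → ℝ} {A c : ℝ} (hu : ∀ n, 0 ≤ u n) (hA : 0 < A)
    (hc : 0 ≤ c) (h : ∀ᶠ n in atTop, u n ≤ A * c ^ n) :
    limsup (fun n : ℕ => u n ^ (1 / (n : ℝ))) atTop ≤ c := by
  have hlim : Tendsto (fun n : ℕ => A ^ (1 / (n : ℝ)) * c) atTop (𝓝 c) := by
    simpa using ((Real.continuousAt_const_rpow hA.ne').tendsto.comp
      tendsto_one_div_atTop_nhds_zero_nat).mul_const c
  have hle : ∀ᶠ n : ℕ in atTop, u n ^ (1 / (n : ℝ)) ≤ A ^ (1 / (n : ℝ)) * c := by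
    filter_upwards [h, eventually_ne_atTop 0] with n hn hn0
    calc u n ^ (1 / (n : ℝ)) ≤ (A * c ^ n) ^ (1 / (n : ℝ)) :=
          Real.rpow_le_rpow (hu n) hn (by positivity)
      _ = A ^ (1 / (n : ℝ)) * c := by
          rw [Real.mul_rpow hA.le (by positivity), one_div, Real.pow_rpow_inv_natCast hc hn0]
  exact (limsup_le_limsup hle (isCoboundedUnder_le_of_le atTop fun n => Real.rpow_nonneg (hu n) _)
    hlim.isBoundedUnder_le).trans hlim.limsup_eq.le

theorem saw_bound_of_avoid_bound_general
    {V : Type*} (G : SimpleGraph V) (Δ : ℕ) (hΔ : 3 ≤ Δ)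
    (hdeg : ∀ v : V, (G.neighborSet v).Finite ∧ (G.neighborSet v).ncard ≤ Δ)
    (N : ℕ) (hN : 1 ≤ N)
    (hav : ∀ u : V, ∀ e ∈ G.incidenceSet u,
      sawCountAvoid G u e N ≤ (Δ - 1) ^ N - 1) :
    (∀ v : V, ∀ k : ℕ, 1 ≤ k →
      sawCount G v (k * N) ≤ Δ * ((Δ - 1) ^ N - 1) ^ k) ∧
    (∀ v : V,
      Filter.limsup (fun n : ℕ => (sawCount G v n : ℝ) ^ (1 / (n : ℝ)))
          Filter.atTop ≤
        (((Δ : ℝ) - 1) ^ N - 1) ^ (1 / (N : ℝ))) ∧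
    (((Δ : ℝ) - 1) ^ N - 1) ^ (1 / (N : ℝ)) < (Δ : ℝ) - 1 := by
  have : G.LocallyFinite := fun v => (hdeg v).1.fintype
  have hdegree (v : V) : G.degree v ≤ Δ := by
    rw [← card_neighborSet_eq_degree, ← Nat.card_eq_fintype_card, Nat.card_coe_set_eq]
    exact (hdeg v).2
  have hN0 : N ≠ 0 := by omega
  have hM := Nat.pow_pred_le_pow_sub_one (show 2 ≤ Δ - 1 by omega) hN0
  have hMcast : (((Δ - 1) ^ N - 1 : ℕ) : ℝ) = ((Δ : ℝ) - 1) ^ N - 1 := by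
    rw [Nat.cast_sub (Nat.one_le_pow _ _ (by omega)), Nat.cast_pow, Nat.cast_pred (by omega),
      Nat.cast_one]
  have hM1 : (1 : ℝ) ≤ ((Δ : ℝ) - 1) ^ N - 1 := by
    rw [← hMcast]
    exact_mod_cast (Nat.one_le_pow _ _ (by omega)).trans hM
  refine ⟨fun v k hk => sawCount_mul_le hdegree hN0 hM hav v hk, fun v => ?_,
    pow_sub_one_rpow_one_div_lt (sub_nonneg.2 (by exact_mod_cast (by omega : 1 ≤ Δ)))
      (by linarith) hN0⟩
  refine limsup_rpow_one_div_le (fun n => Nat.cast_nonneg _) (by positivity : (0 : ℝ) < Δ ^ N)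
    (by positivity) ?_
  filter_upwards [eventually_ge_atTop N] with n hn
  calc (sawCount G v n : ℝ) ≤ Δ ^ N * (((Δ : ℝ) - 1) ^ N - 1) ^ (n / N) := by
        rw [← hMcast]
        exact_mod_cast sawCount_le_pow_mul_pow_div hdegree hN0 hM hav v hn
    _ ≤ _ := by
        gcongr
        exact pow_le_rpow_one_div_pow hM1 hN0 (Nat.div_mul_le_self n N)

theorem saw_bound_of_avoid_bound
    {V : Type*} (G : SimpleGraph V) (Δ : ℕ) (hΔ : 3 ≤ Δ)
    (hinf : Infinite V) (hconn : G.Connected)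
    (hdeg : ∀ v : V, (G.neighborSet v).Finite ∧ (G.neighborSet v).ncard ≤ Δ)
    (N : ℕ) (hN : 1 ≤ N)
    (hav : ∀ u : V, ∀ e ∈ G.incidenceSet u,
      sawCountAvoid G u e N ≤ (Δ - 1) ^ N - 1) :
    (∀ v : V, ∀ k : ℕ, 1 ≤ k →
      sawCount G v (k * N) ≤ Δ * ((Δ - 1) ^ N - 1) ^ k) ∧
    (∀ v : V,
      Filter.limsup (fun n : ℕ => (sawCount G v n : ℝ) ^ (1 / (n : ℝ)))
          Filter.atTop ≤
        (((Δ : ℝ) - 1) ^ N - 1) ^ (1 / (N : ℝ))) ∧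
    (((Δ : ℝ) - 1) ^ N - 1) ^ (1 / (N : ℝ)) < (Δ : ℝ) - 1 :=
  saw_bound_of_avoid_bound_general G Δ hΔ hdeg N hN hav
end
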